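/- arXiv:2209.07101 — 4 statements merged into one kernel-verified Lean document; each statement's English description precedes it below -/
import Mathlib

section
/- The function J is differentiable at every t ∈ (2π/3, π) with derivative J′(t) = (cos(t) − cos(2t)) / (cos(J(t)) − cos(2·J(t))), and moreover J′(t) < −1 for every t ∈ (2π/3, π). -/
noncomputable section

open Real

/-- The L-shaped arc `γ₀`. -/
def gamma0 : Set ℂ :=
  ((fun x : ℝ => (-1 + Complex.I) * (x : ℂ)) '' Set.Icc 0 ((27 : ℝ) ^ ((1 : ℝ) / 4) / Real.sqrt 2)) ∪
  ((fun x : ℝ => (-1 - Complex.I) * (x : ℂ)) '' Set.Icc 0 ((27 : ℝ) ^ ((1 : ℝ) / 4) / Real.sqrt 2))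

/-- The exterior conformal map `ψ₀` (principal branch of the square root;
at `w = ±1` Lean's conventions give `ψ₀(±1) = 0`, matching the continuous extension). -/
def psi0 (w : ℂ) : ℂ := (w - 1 / w) * ((w - 1) / (w + 1)) ^ ((1 : ℂ) / 2)

def thetaAux (n k : ℕ) : ℝ :=
  if n % 2 = 0 then 2 * (k : ℝ) * Real.pi / ((n : ℝ) + 1)
  else (2 * (k : ℝ) + 1) * Real.pi / ((n : ℝ) + 1)

/-- The angles `θ_{n,k}`, `0 ≤ k ≤ n`. -/
def theta (n k : ℕ) : ℝ :=
  if k ≤ n / 2 then thetaAux n k else - thetaAux n (2 * (n / 2) + 1 - k)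

/-- The function `J : [2π/3, π] → [0, 2π/3]`; for `t ∈ [2π/3, π]` the set below is a
singleton by strict monotonicity of `x ↦ sin x · sin²(x/2)` on `[0, 2π/3]`. -/
def Jfun (t : ℝ) : ℝ :=
  sInf {s : ℝ | s ∈ Set.Icc 0 (2 * Real.pi / 3) ∧
    Real.sin s * Real.sin (s / 2) ^ 2 = Real.sin t * Real.sin (t / 2) ^ 2}

/-- The inverse function `J⁻¹ : [0, 2π/3] → [2π/3, π]`. -/
def Jinvfun (s : ℝ) : ℝ :=
  sInf {t : ℝ | t ∈ Set.Icc (2 * Real.pi / 3) Real.pi ∧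
    Real.sin t * Real.sin (t / 2) ^ 2 = Real.sin s * Real.sin (s / 2) ^ 2}

def rho (n : ℕ) : ℝ := 1 + 1 / ((n : ℝ) + 1)

/-- The Fejér points `z*_{n,k}` on `γ₀`. -/
def zstar (n k : ℕ) : ℂ := psi0 (Complex.exp (Complex.I * (theta n k : ℂ)))

/-- The points `ζ*_{n,k}` on the level curve `Γ_n`. -/
def zetas (n k : ℕ) : ℂ := psi0 ((rho n : ℂ) * Complex.exp (Complex.I * (theta n k : ℂ)))

/-- `ω_n(z) = ∏_{k=0}^n (z − z*_{n,k})`. -/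
def omegaF (n : ℕ) : ℂ → ℂ := fun z => ∏ k ∈ Finset.range (n + 1), (z - zstar n k)

def sigmaSgn (t : ℝ) : ℝ := if 0 ≤ t then 1 else -1

/-- `k₁(t)`: the smallest index `k ≤ n` with `|θ_{n,k}| ≤ 2π/3` minimizing `|θ_{n,k} − t|`. -/
def k1 (n : ℕ) (t : ℝ) : ℕ :=
  sInf {k : ℕ | k ≤ n ∧ abs (theta n k) ≤ 2 * Real.pi / 3 ∧
    ∀ j, j ≤ n → abs (theta n j) ≤ 2 * Real.pi / 3 →
      abs (theta n k - t) ≤ abs (theta n j - t)}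

/-- `k₂(t)`: the smallest index `k ≤ n` with `2π/3 < |θ_{n,k}| < π` minimizing
`|θ_{n,k} − σ(t)·J⁻¹(|t|)|`. -/
def k2 (n : ℕ) (t : ℝ) : ℕ :=
  sInf {k : ℕ | k ≤ n ∧ 2 * Real.pi / 3 < abs (theta n k) ∧ abs (theta n k) < Real.pi ∧
    ∀ j, j ≤ n → 2 * Real.pi / 3 < abs (theta n j) → abs (theta n j) < Real.pi →
      abs (theta n k - sigmaSgn t * Jinvfun (abs t)) ≤
        abs (theta n j - sigmaSgn t * Jinvfun (abs t))}

/-- `(j,k)` is an adjustment pair. -/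
def AdjPair (n j k : ℕ) : Prop :=
  j ≤ n ∧ k ≤ n ∧ 0 ≤ theta n j ∧ theta n j ≤ 2 * Real.pi / 3 ∧
  2 * Real.pi / 3 < theta n k ∧ theta n k < Real.pi ∧
  |theta n j - Jfun (theta n k)| < 2 * Real.pi / (3 * ((n : ℝ) + 1))

/-- The adjustment conditions (i)–(v) on `θ̃ : {0,…,n} → ℝ`. -/
def AdjCond (n : ℕ) (θt : ℕ → ℝ) : Prop :=
  (∀ j, j ≤ n → 0 ≤ theta n j → theta n j ≤ 2 * Real.pi / 3 →
    (∀ k, ¬ AdjPair n j k) → θt j = theta n j) ∧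
  (∀ j k, AdjPair n j k → Jfun (theta n k) ≤ theta n j →
    θt j = Jfun (theta n k) + 2 * Real.pi / (3 * ((n : ℝ) + 1)) ∧
    θt k = theta n j - 2 * Real.pi / (3 * ((n : ℝ) + 1))) ∧
  (∀ j k, AdjPair n j k → theta n j < Jfun (theta n k) →
    θt j = Jfun (theta n k) - 2 * Real.pi / (3 * ((n : ℝ) + 1)) ∧
    θt k = theta n j + 2 * Real.pi / (3 * ((n : ℝ) + 1))) ∧
  (∀ k, k ≤ n → 2 * Real.pi / 3 < theta n k → theta n k < Real.pi →
    (∀ j, ¬ AdjPair n j k) → θt k = Jfun (theta n k)) ∧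
  (∀ k, n / 2 < k → k ≤ n → θt k = - θt (2 * (n / 2) + 1 - k))

/-- `dist(z, Γ_n) = inf_{|w| = ρ_n} |z − ψ₀(w)|`. -/
def distGamma (n : ℕ) (z : ℂ) : ℝ :=
  Metric.infDist z (psi0 '' {w : ℂ | ‖w‖ = rho n})

/-- `∫_{γ₀} |P(z)|^p |dz|`. -/
def Pint (p : ℝ) (P : Polynomial ℂ) : ℝ :=
  Real.sqrt 2 * ∫ x in (0 : ℝ)..((27 : ℝ) ^ ((1 : ℝ) / 4) / Real.sqrt 2),
    ((‖P.eval ((-1 + Complex.I) * (x : ℂ))‖) ^ p +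
     (‖P.eval ((-1 - Complex.I) * (x : ℂ))‖) ^ p)

namespace Stmt5Aux

noncomputable def f (x : ℝ) : ℝ := Real.sin x * Real.sin (x / 2) ^ 2

lemma f_cont : Continuous f := by unfold f; fun_prop

lemma sin_half_sq (x : ℝ) : Real.sin (x / 2) ^ 2 = 1 / 2 - Real.cos x / 2 := by
  have := Real.sin_sq_eq_half_sub (x / 2)
  rwa [show 2 * (x / 2) = x by ring] at this

lemma f_hasDerivAt (x : ℝ) :
    HasDerivAt f ((Real.cos x - Real.cos (2 * x)) / 2) x := by
  have h2 : HasDerivAt (fun y : ℝ => Real.sin (y / 2)) (Real.cos (x / 2) * (1 / 2)) x := by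
    simpa [Function.comp_def] using (Real.hasDerivAt_sin (x / 2)).comp x ((hasDerivAt_id x).div_const 2)
  have h := (Real.hasDerivAt_sin x).mul (h2.pow 2)
  refine (h.congr_deriv (Eq.symm ?_) : HasDerivAt f _ x)
  push_cast [pow_one, Pi.pow_apply]
  have hs := sin_half_sq x
  have hsin : Real.sin x = 2 * Real.sin (x / 2) * Real.cos (x / 2) := by
    have := Real.sin_two_mul (x / 2)
    rwa [show 2 * (x / 2) = x by ring] at this
  have hcos2 : Real.cos (2 * x) = 2 * Real.cos x ^ 2 - 1 := Real.cos_two_mul x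
  have hsx : Real.sin x ^ 2 = 1 - Real.cos x ^ 2 := Real.sin_sq x
  linear_combination (-Real.cos x) * hs + (Real.sin x / 2) * hsin - (1/2) * hcos2 - (1/2) * hsx

lemma cos_two_pi_div_three : Real.cos (2 * π / 3) = -(1 / 2) := by
  rw [show 2 * π / 3 = π - π / 3 by ring, Real.cos_pi_sub, Real.cos_pi_div_three]

lemma deriv_pos {x : ℝ} (h0 : 0 < x) (h1 : x < 2 * π / 3) :
    0 < (Real.cos x - Real.cos (2 * x)) / 2 := by
  have hpi := Real.pi_pos
  have hc1 : Real.cos x < 1 := by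
    have := Real.cos_lt_cos_of_nonneg_of_le_pi (le_refl 0) (by linarith) h0
    simpa using this
  have hc2 : -(1 / 2) < Real.cos x := by
    have := Real.cos_lt_cos_of_nonneg_of_le_pi h0.le (by linarith) h1
    rwa [cos_two_pi_div_three] at this
  have := Real.cos_two_mul x
  nlinarith

lemma deriv_neg {x : ℝ} (h0 : 2 * π / 3 < x) (h1 : x < π) :
    (Real.cos x - Real.cos (2 * x)) / 2 < 0 := by
  have hpi := Real.pi_pos
  have hc1 : Real.cos x < -(1 / 2) := by
    have := Real.cos_lt_cos_of_nonneg_of_le_pi (by linarith) h1.le h0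
    rwa [cos_two_pi_div_three] at this
  have hc2 : -1 < Real.cos x := by
    have := Real.cos_lt_cos_of_nonneg_of_le_pi (by linarith : (0:ℝ) ≤ x) (le_refl π) h1
    rwa [Real.cos_pi] at this
  have := Real.cos_two_mul x
  nlinarith

lemma f_mono : StrictMonoOn f (Set.Icc 0 (2 * π / 3)) := by
  apply strictMonoOn_of_deriv_pos (convex_Icc _ _) f_cont.continuousOn
  intro x hx
  rw [interior_Icc] at hx
  rw [(f_hasDerivAt x).deriv]
  exact deriv_pos hx.1 hx.2

lemma f_anti : StrictAntiOn f (Set.Icc (2 * π / 3) π) := by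
  apply strictAntiOn_of_deriv_neg (convex_Icc _ _) f_cont.continuousOn
  intro x hx
  rw [interior_Icc] at hx
  rw [(f_hasDerivAt x).deriv]
  exact deriv_neg hx.1 hx.2

lemma f_zero : f 0 = 0 := by simp [f]
lemma f_pi : f π = 0 := by simp [f]

noncomputable def M : ℝ := f (2 * π / 3)

noncomputable def finv (y : ℝ) : ℝ :=
  sInf {s : ℝ | s ∈ Set.Icc 0 (2 * π / 3) ∧ f s = y}

lemma finv_spec {y : ℝ} (hy : y ∈ Set.Icc 0 M) :
    finv y ∈ Set.Icc 0 (2 * π / 3) ∧ f (finv y) = y := by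
  have hpi := Real.pi_pos
  have h23 : (0:ℝ) ≤ 2 * π / 3 := by positivity
  obtain ⟨s, hs, hfs⟩ : ∃ s ∈ Set.Icc 0 (2 * π / 3), f s = y := by
    have := intermediate_value_Icc h23 f_cont.continuousOn
    rw [f_zero] at this
    exact this (by exact hy)
  have hset : {s' : ℝ | s' ∈ Set.Icc 0 (2 * π / 3) ∧ f s' = y} = {s} := by
    ext s'
    simp only [Set.mem_setOf_eq, Set.mem_singleton_iff]
    constructor
    · rintro ⟨hs', hfs'⟩
      exact f_mono.injOn hs' hs (hfs'.trans hfs.symm)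
    · rintro rfl; exact ⟨hs, hfs⟩
  rw [finv, hset, csInf_singleton]
  exact ⟨hs, hfs⟩

lemma f_mem {s : ℝ} (hs : s ∈ Set.Icc 0 (2 * π / 3)) : f s ∈ Set.Icc 0 M := by
  constructor
  · rw [← f_zero]
    rcases eq_or_lt_of_le hs.1 with h | h
    · rw [← h]
    · exact (f_mono (Set.left_mem_Icc.2 (hs.1.trans hs.2)) hs h).le
  · rcases eq_or_lt_of_le hs.2 with h | h
    · rw [h]; exact le_refl M
    · exact (f_mono hs (Set.right_mem_Icc.2 (hs.1.trans hs.2)) h).le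

lemma finv_f {s : ℝ} (hs : s ∈ Set.Icc 0 (2 * π / 3)) : finv (f s) = s := by
  obtain ⟨h1, h2⟩ := finv_spec (f_mem hs)
  exact f_mono.injOn h1 hs h2

lemma finv_mono {y1 y2 : ℝ} (h1 : y1 ∈ Set.Icc 0 M) (h2 : y2 ∈ Set.Icc 0 M)
    (h : y1 ≤ y2) : finv y1 ≤ finv y2 := by
  by_contra hc
  push_neg at hc
  have := f_mono (finv_spec h2).1 (finv_spec h1).1 hc
  rw [(finv_spec h1).2, (finv_spec h2).2] at this
  linarith

lemma finv_contAt {y₀ : ℝ} (hy : y₀ ∈ Set.Ioo 0 M) : ContinuousAt finv y₀ := by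
  have hpi := Real.pi_pos
  have hy' : y₀ ∈ Set.Icc 0 M := ⟨hy.1.le, hy.2.le⟩
  set s₀ := finv y₀ with hs₀
  have hsIcc : s₀ ∈ Set.Icc 0 (2 * π / 3) := (finv_spec hy').1
  have hfs₀ : f s₀ = y₀ := (finv_spec hy').2
  have hs0 : 0 < s₀ := by
    rcases eq_or_lt_of_le hsIcc.1 with h | h
    · exfalso; rw [← h, f_zero] at hfs₀; linarith [hy.1]
    · exact h
  have hs1 : s₀ < 2 * π / 3 := by
    rcases eq_or_lt_of_le hsIcc.2 with h | h
    · exfalso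
      rw [h] at hfs₀
      have hM : M = y₀ := hfs₀
      linarith [hy.2]
    · exact h
  rw [Metric.continuousAt_iff]
  intro ε hε
  set ε' := min (ε / 2) (min (s₀ / 2) ((2 * π / 3 - s₀) / 2)) with hε'
  have hε'pos : 0 < ε' := by
    apply lt_min (by linarith)
    apply lt_min (by linarith) (by linarith)
  have hε'1 : ε' ≤ s₀ / 2 := le_trans (min_le_right _ _) (min_le_left _ _)
  have hε'2 : ε' ≤ (2 * π / 3 - s₀) / 2 := le_trans (min_le_right _ _) (min_le_right _ _)
  have hmem1 : s₀ - ε' ∈ Set.Icc 0 (2 * π / 3) := ⟨by linarith, by linarith⟩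
  have hmem2 : s₀ + ε' ∈ Set.Icc 0 (2 * π / 3) := ⟨by linarith, by linarith⟩
  have hlt1 : f (s₀ - ε') < y₀ := by
    rw [← hfs₀]; exact f_mono hmem1 hsIcc (by linarith)
  have hlt2 : y₀ < f (s₀ + ε') := by
    rw [← hfs₀]; exact f_mono hsIcc hmem2 (by linarith)
  refine ⟨min (y₀ - f (s₀ - ε')) (f (s₀ + ε') - y₀), lt_min (by linarith) (by linarith), ?_⟩
  intro y hy2
  rw [Real.dist_eq] at hy2
  have hd1 : f (s₀ - ε') < y := by
    have := abs_lt.1 (lt_of_lt_of_le hy2 (min_le_left _ _))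
    linarith [this.1]
  have hd2 : y < f (s₀ + ε') := by
    have := abs_lt.1 (lt_of_lt_of_le hy2 (min_le_right _ _))
    linarith [this.2]
  have hyIcc : y ∈ Set.Icc 0 M :=
    ⟨le_trans (f_mem hmem1).1 hd1.le, le_trans hd2.le (f_mem hmem2).2⟩
  have hb1 : s₀ - ε' ≤ finv y := by
    rw [← finv_f hmem1]; exact finv_mono (f_mem hmem1) hyIcc hd1.le
  have hb2 : finv y ≤ s₀ + ε' := by
    rw [← finv_f hmem2]; exact finv_mono hyIcc (f_mem hmem2) hd2.le
  rw [Real.dist_eq, abs_lt]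
  constructor <;> [linarith [min_le_left (ε/2) (min (s₀/2) ((2*π/3 - s₀)/2))];
    linarith [min_le_left (ε/2) (min (s₀/2) ((2*π/3 - s₀)/2))]]

end Stmt5Aux


namespace Stmt5Aux

lemma cos_bound_hi {s : ℝ} (h0 : 0 < s) (h1 : s < 2 * π / 3) :
    -(1 / 2) < Real.cos s ∧ Real.cos s < 1 := by
  have hpi := Real.pi_pos
  constructor
  · have := Real.cos_lt_cos_of_nonneg_of_le_pi h0.le (by linarith) h1
    rwa [cos_two_pi_div_three] at this
  · have := Real.cos_lt_cos_of_nonneg_of_le_pi (le_refl 0) (by linarith) h0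
    simpa using this

lemma cos_bound_lo {t : ℝ} (h0 : 2 * π / 3 < t) (h1 : t < π) :
    -1 < Real.cos t ∧ Real.cos t < -(1 / 2) := by
  have hpi := Real.pi_pos
  constructor
  · have := Real.cos_lt_cos_of_nonneg_of_le_pi (by linarith : (0:ℝ) ≤ t) (le_refl π) h1
    rwa [Real.cos_pi] at this
  · have := Real.cos_lt_cos_of_nonneg_of_le_pi (by linarith : (0:ℝ) ≤ 2 * π / 3) h1.le h0
    rwa [cos_two_pi_div_three] at this

lemma key2 (a b : ℝ) (ha1 : 3 / 2 < a) (hb1 : 0 < b) (hb2 : b < 3 / 2)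
    (h : (2 - a) * a ^ 3 = (2 - b) * b ^ 3) : 3 * (a + b) < 2 * (a ^ 2 + b ^ 2) := by
  have hab : b < a := by linarith
  have hE : 2 * (a ^ 2 + a * b + b ^ 2) - (a + b) * (a ^ 2 + b ^ 2) = 0 := by
    have h2 : (a - b) * (2 * (a ^ 2 + a * b + b ^ 2) - (a + b) * (a ^ 2 + b ^ 2)) = 0 := by
      linear_combination h
    rcases mul_eq_zero.1 h2 with h3 | h3
    · linarith
    · exact h3
  have hs3 : a + b < 3 := by nlinarith [sq_nonneg (a - b), hE]
  nlinarith [hE, hs3, sq_nonneg (a - b)]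

lemma key {t s : ℝ} (ht : t ∈ Set.Ioo (2 * π / 3) π) (hs : s ∈ Set.Ioo 0 (2 * π / 3))
    (heq : f s = f t) :
    (Real.cos t - Real.cos (2 * t)) + (Real.cos s - Real.cos (2 * s)) < 0 := by
  have hpi := Real.pi_pos
  obtain ⟨ht1, ht2⟩ := ht
  obtain ⟨hs1, hs2⟩ := hs
  obtain ⟨hc2, hc1⟩ := cos_bound_lo ht1 ht2
  obtain ⟨hd1, hd2⟩ := cos_bound_hi hs1 hs2
  have hu : 0 < Real.sin t := Real.sin_pos_of_pos_of_lt_pi (by linarith) ht2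
  have hv : 0 < Real.sin s := Real.sin_pos_of_pos_of_lt_pi hs1 (by linarith)
  have hu2 : Real.sin t ^ 2 = 1 - Real.cos t ^ 2 := Real.sin_sq t
  have hv2 : Real.sin s ^ 2 = 1 - Real.cos s ^ 2 := Real.sin_sq s
  have heq2 : Real.sin t * (1 - Real.cos t) = Real.sin s * (1 - Real.cos s) := by
    have h1 := sin_half_sq s
    have h2 := sin_half_sq t
    have heq' : Real.sin s * Real.sin (s / 2) ^ 2 = Real.sin t * Real.sin (t / 2) ^ 2 := heq
    linear_combination -2 * heq' + 2 * Real.sin s * h1 - 2 * Real.sin t * h2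
  have hsq : (1 - Real.cos t ^ 2) * (1 - Real.cos t) ^ 2
      = (1 - Real.cos s ^ 2) * (1 - Real.cos s) ^ 2 := by
    linear_combination (Real.sin t * (1 - Real.cos t) + Real.sin s * (1 - Real.cos s)) * heq2
      - (1 - Real.cos t) ^ 2 * hu2 + (1 - Real.cos s) ^ 2 * hv2
  have h := key2 (1 - Real.cos t) (1 - Real.cos s) (by linarith) (by linarith) (by linarith)
    (by linear_combination hsq)
  have hct := Real.cos_two_mul t
  have hcs := Real.cos_two_mul s
  nlinarith [h, hct, hcs]

end Stmt5Aux

/-- `J` is differentiable on `(2π/3, π)` with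
`J′(t) = (cos t − cos 2t)/(cos J(t) − cos 2J(t))`, and `J′(t) < −1` there. -/
theorem stmt5 (t : ℝ) (ht : t ∈ Set.Ioo (2 * Real.pi / 3) Real.pi) :
    HasDerivAt Jfun
      ((Real.cos t - Real.cos (2 * t)) / (Real.cos (Jfun t) - Real.cos (2 * Jfun t))) t ∧
    (Real.cos t - Real.cos (2 * t)) / (Real.cos (Jfun t) - Real.cos (2 * Jfun t)) < -1 := by
  obtain ⟨ht1, ht2⟩ := ht
  have hpi := Real.pi_pos
  have htmem : t ∈ Set.Icc (2 * π / 3) π := ⟨ht1.le, ht2.le⟩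
  have hft_pos : 0 < Stmt5Aux.f t := by
    have := Stmt5Aux.f_anti htmem (Set.right_mem_Icc.2 (by linarith)) ht2
    rwa [Stmt5Aux.f_pi] at this
  have hft_lt : Stmt5Aux.f t < Stmt5Aux.M :=
    Stmt5Aux.f_anti (Set.left_mem_Icc.2 (by linarith)) htmem ht1
  have hftIoo : Stmt5Aux.f t ∈ Set.Ioo 0 Stmt5Aux.M := ⟨hft_pos, hft_lt⟩
  have hftIcc : Stmt5Aux.f t ∈ Set.Icc 0 Stmt5Aux.M := ⟨hft_pos.le, hft_lt.le⟩
  have hJfun : Jfun = fun x => Stmt5Aux.finv (Stmt5Aux.f x) := rfl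
  set s₀ := Stmt5Aux.finv (Stmt5Aux.f t) with hs₀def
  have hJt : Jfun t = s₀ := rfl
  have hsIcc : s₀ ∈ Set.Icc 0 (2 * π / 3) := (Stmt5Aux.finv_spec hftIcc).1
  have hfs : Stmt5Aux.f s₀ = Stmt5Aux.f t := (Stmt5Aux.finv_spec hftIcc).2
  have hs0 : 0 < s₀ := by
    rcases eq_or_lt_of_le hsIcc.1 with h | h
    · exfalso
      rw [← h, Stmt5Aux.f_zero] at hfs
      linarith
    · exact h
  have hs1 : s₀ < 2 * π / 3 := by
    rcases eq_or_lt_of_le hsIcc.2 with h | h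
    · exfalso
      rw [h] at hfs
      have hM : Stmt5Aux.M = Stmt5Aux.f t := hfs
      linarith
    · exact h
  have hderpos := Stmt5Aux.deriv_pos hs0 hs1
  have hev : ∀ᶠ y in nhds (Stmt5Aux.f t), Stmt5Aux.f (Stmt5Aux.finv y) = y := by
    filter_upwards [Ioo_mem_nhds hft_pos hft_lt] with y hy
    exact (Stmt5Aux.finv_spec ⟨hy.1.le, hy.2.le⟩).2
  have hinv : HasDerivAt Stmt5Aux.finv
      (((Real.cos s₀ - Real.cos (2 * s₀)) / 2)⁻¹) (Stmt5Aux.f t) :=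
    HasDerivAt.of_local_left_inverse (Stmt5Aux.finv_contAt hftIoo)
      (Stmt5Aux.f_hasDerivAt s₀) (ne_of_gt hderpos) hev
  have hcomp := HasDerivAt.comp (𝕜 := ℝ) t hinv (Stmt5Aux.f_hasDerivAt t)
  have hA : 0 < Real.cos s₀ - Real.cos (2 * s₀) := by linarith
  have hkey : (Real.cos t - Real.cos (2 * t)) + (Real.cos s₀ - Real.cos (2 * s₀)) < 0 :=
    Stmt5Aux.key ⟨ht1, ht2⟩ ⟨hs0, hs1⟩ hfs
  constructor
  · have hval : (Real.cos t - Real.cos (2 * t)) /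
        (Real.cos (Jfun t) - Real.cos (2 * Jfun t)) =
        ((Real.cos s₀ - Real.cos (2 * s₀)) / 2)⁻¹ * ((Real.cos t - Real.cos (2 * t)) / 2) := by
      rw [hJt]
      field_simp
    rw [hval]
    exact hcomp
  · rw [hJt, div_lt_iff₀ hA]
    linarith
end
end

section
/- As t → π from the left, (cos(t) − cos(2t)) / (cos(J(t)) − cos(2·J(t))) + (4^{1/3}/3)·(π − t)^{−2/3} + 1/3 tends to 0. -/
noncomputable section

open Real

/-! ### Auxiliary material for Statement 6 -/

open Filter Set Topology

namespace Stmt6Aux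

/-- `f(x) = sin x · sin²(x/2)`. -/
def ff (x : ℝ) : ℝ := sin x * sin (x/2)^2

lemma ff_hasDerivAt (x : ℝ) : HasDerivAt ff (sin (x/2) * sin (x + x/2)) x := by
  have h1 : HasDerivAt (fun y : ℝ => y/2) (1/2) x := (hasDerivAt_id x).div_const 2
  have h2 : HasDerivAt (fun y : ℝ => sin (y/2)) (cos (x/2) * (1/2)) x :=
    h1.sin
  have h3 : HasDerivAt (fun y : ℝ => sin (y/2)^2)
      (2 * sin (x/2) ^ 1 * (cos (x/2) * (1/2))) x := h2.pow 2
  have h4 := (Real.hasDerivAt_sin x).mul h3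
  have h5 : sin (x/2) * sin (x + x/2)
      = cos x * sin (x/2)^2 + sin x * (2 * sin (x/2) ^ 1 * (cos (x/2) * (1/2))) := by
    rw [Real.sin_add]; ring
  rw [h5]; exact h4

lemma ff_deriv (x : ℝ) : deriv ff x = sin (x/2) * sin (x + x/2) := (ff_hasDerivAt x).deriv

lemma ff_cont : Continuous ff := by unfold ff; fun_prop

lemma ff_mono : StrictMonoOn ff (Icc 0 (2*π/3)) := by
  apply strictMonoOn_of_deriv_pos (convex_Icc _ _) ff_cont.continuousOn
  intro x hx
  rw [interior_Icc] at hx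
  rw [ff_deriv]
  have hπ := Real.pi_pos
  have h1 : 0 < sin (x/2) := Real.sin_pos_of_pos_of_lt_pi (by linarith [hx.1]) (by nlinarith [hx.2])
  have h2 : 0 < sin (x + x/2) := Real.sin_pos_of_pos_of_lt_pi (by linarith [hx.1]) (by nlinarith [hx.2])
  positivity

lemma ff_anti : StrictAntiOn ff (Icc (2*π/3) π) := by
  apply strictAntiOn_of_deriv_neg (convex_Icc _ _) ff_cont.continuousOn
  intro x hx
  rw [interior_Icc] at hx
  rw [ff_deriv]
  have hπ := Real.pi_pos
  have h1 : 0 < sin (x/2) := Real.sin_pos_of_pos_of_lt_pi (by linarith [hx.1]) (by linarith [hx.2])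
  have h2 : sin (x + x/2) < 0 := by
    have : sin (x + x/2) = - sin (x + x/2 - π) := by
      rw [← Real.sin_add_pi]; ring_nf
    rw [this, neg_lt, neg_zero]
    exact Real.sin_pos_of_pos_of_lt_pi (by nlinarith [hx.1]) (by nlinarith [hx.2])
  nlinarith

lemma Jset (t : ℝ) : {s : ℝ | s ∈ Set.Icc 0 (2 * Real.pi / 3) ∧
    Real.sin s * Real.sin (s / 2) ^ 2 = Real.sin t * Real.sin (t / 2) ^ 2}
    = {s : ℝ | s ∈ Set.Icc 0 (2 * Real.pi / 3) ∧ ff s = ff t} := rfl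

lemma Jfun_spec {t : ℝ} (ht : t ∈ Ioo (2*π/3) π) :
    Jfun t ∈ Ioo 0 (2*π/3) ∧ ff (Jfun t) = ff t := by
  have hπ := Real.pi_pos
  have hc : (0:ℝ) ≤ 2*π/3 := by linarith
  have hft_pos : 0 < ff t := by
    have h1 : 0 < sin t := Real.sin_pos_of_pos_of_lt_pi (by linarith [ht.1]) ht.2
    have h2 : 0 < sin (t/2) := Real.sin_pos_of_pos_of_lt_pi (by linarith [ht.1]) (by linarith [ht.2])
    unfold ff; positivity
  have hft_lt : ff t < ff (2*π/3) := by
    apply ff_anti ⟨le_refl _, by linarith⟩ ⟨le_of_lt ht.1, le_of_lt ht.2⟩ ht.1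
  have hiv := intermediate_value_Icc hc ff_cont.continuousOn
  have hff0 : ff 0 = 0 := by simp [ff]
  have hmem : ff t ∈ Icc (ff 0) (ff (2*π/3)) := by
    rw [hff0]; exact ⟨le_of_lt hft_pos, le_of_lt hft_lt⟩
  obtain ⟨s₀, hs₀mem, hs₀⟩ := hiv hmem
  have huniq : ∀ s ∈ Icc (0:ℝ) (2*π/3), ff s = ff t → s = s₀ := by
    intro s hs hfs
    exact ff_mono.injOn hs hs₀mem (by rw [hfs, hs₀])
  have hset : {s : ℝ | s ∈ Set.Icc 0 (2*π/3) ∧ ff s = ff t} = {s₀} := by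
    ext s
    simp only [Set.mem_setOf_eq, Set.mem_singleton_iff]
    constructor
    · rintro ⟨h1, h2⟩; exact huniq s h1 h2
    · rintro rfl; exact ⟨hs₀mem, hs₀⟩
  have hJ : Jfun t = s₀ := by rw [Jfun, Jset, hset, csInf_singleton]
  rw [hJ]
  refine ⟨⟨?_, ?_⟩, hs₀⟩
  · rcases lt_or_eq_of_le hs₀mem.1 with h | h
    · exact h
    · exfalso; rw [← h, hff0] at hs₀; linarith
  · rcases lt_or_eq_of_le hs₀mem.2 with h | h
    · exact h
    · exfalso; rw [h] at hs₀; linarith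

lemma Jfun_lt {t δ : ℝ} (ht : t ∈ Ioo (2*π/3) π) (hδ : δ ∈ Ioc 0 (2*π/3))
    (h : ff t < ff δ) : Jfun t < δ := by
  obtain ⟨hJmem, hJeq⟩ := Jfun_spec ht
  by_contra hle
  push_neg at hle
  rcases lt_or_eq_of_le hle with h' | h'
  · have := ff_mono ⟨le_of_lt hδ.1, hδ.2⟩ ⟨le_of_lt hJmem.1, le_of_lt hJmem.2⟩ h'
    rw [hJeq] at this; linarith
  · rw [h', hJeq] at h; linarith

lemma tendsto_J : Tendsto Jfun (nhdsWithin π (Iio π)) (nhdsWithin 0 (Ioi 0)) := by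
  have hπ := Real.pi_pos
  have hev : ∀ᶠ t in nhdsWithin π (Iio π), t ∈ Ioo (2*π/3) π := by
    apply Ioo_mem_nhdsLT; linarith
  rw [tendsto_nhdsWithin_iff]
  constructor
  · rw [tendsto_order]
    constructor
    · intro b hb
      filter_upwards [hev] with t ht
      exact lt_trans hb (Jfun_spec ht).1.1
    · intro δ hδ
      set δ' := min δ (2*π/3) with hδ'
      have hδ'pos : 0 < δ' := lt_min hδ (by linarith)
      have hδ'le : δ' ≤ 2*π/3 := min_le_right _ _
      have hfδ' : 0 < ff δ' := by
        have h1 : 0 < sin δ' := Real.sin_pos_of_pos_of_lt_pi hδ'pos (by linarith)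
        have h2 : 0 < sin (δ'/2) := Real.sin_pos_of_pos_of_lt_pi (by linarith) (by linarith)
        unfold ff; positivity
      have hfc : Tendsto ff (nhdsWithin π (Iio π)) (nhds (ff π)) :=
        (ff_cont.tendsto π).mono_left nhdsWithin_le_nhds
      have hffπ : ff π = 0 := by simp [ff]
      rw [hffπ] at hfc
      have hev2 : ∀ᶠ t in nhdsWithin π (Iio π), ff t < ff δ' :=
        hfc.eventually (eventually_lt_nhds hfδ')
      filter_upwards [hev, hev2] with t ht hft
      calc Jfun t < δ' := Jfun_lt ht ⟨hδ'pos, hδ'le⟩ hft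
        _ ≤ δ := min_le_left _ _
  · filter_upwards [hev] with t ht
    exact (Jfun_spec ht).1.1

/-! ### Taylor-type limits -/

/-- `rr x = (sin x − x)/x³`, which tends to `−1/6`. -/
def rr (x : ℝ) : ℝ := (sin x - x)/x^3

lemma sin_eq_rr {x : ℝ} (hx : x ≠ 0) : sin x = x + x^3 * rr x := by
  rw [rr]; field_simp; ring

lemma tendsto_rr : Tendsto rr (nhdsWithin 0 (Ioi 0)) (nhds (-1/6)) := by
  rw [← tendsto_sub_nhds_zero_iff]
  apply squeeze_zero_norm' (a := fun x => x * (5/96))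
  · filter_upwards [Ioc_mem_nhdsGT_of_mem (Set.left_mem_Ico.mpr one_pos)] with x hx
    have hx0 : 0 < x := hx.1
    have hx1 : |x| ≤ 1 := by rw [abs_of_pos hx0]; exact hx.2
    have hb := Real.sin_bound hx1
    have h : rr x - (-1)/6 = (sin x - (x - x^3/6))/x^3 := by
      rw [rr]; field_simp; ring
    rw [show rr x - (-1/6) = rr x - (-1)/6 by ring, h]
    rw [Real.norm_eq_abs, abs_div, abs_of_pos (by positivity : (0:ℝ) < x^3)]
    rw [div_le_iff₀ (by positivity)]
    calc |sin x - (x - x^3/6)| ≤ |x|^4 * (5/96) := by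
          have h5 : |x|^5 = |x|^4*|x| := by ring
          nlinarith [mul_le_mul_of_nonneg_left hx1 (pow_nonneg (abs_nonneg x) 4), pow_nonneg (abs_nonneg x) 4]
      _ = x * (5/96) * x^3 := by rw [abs_of_pos hx0]; ring
  · have h : Tendsto (fun x : ℝ => x * (5/96)) (nhds 0) (nhds (0 * (5/96))) :=
      (continuous_id.mul continuous_const).tendsto 0
    simpa using h.mono_left nhdsWithin_le_nhds

lemma tendsto_half : Tendsto (fun x : ℝ => x/2)
    (nhdsWithin 0 (Ioi 0)) (nhdsWithin 0 (Ioi 0)) := by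
  rw [tendsto_nhdsWithin_iff]
  constructor
  · simpa using ((continuous_id.div_const (2:ℝ)).tendsto (0:ℝ)).mono_left nhdsWithin_le_nhds
  · filter_upwards [self_mem_nhdsWithin] with x hx
    exact div_pos hx (by norm_num : (0:ℝ) < 2)

lemma tendsto_rr2 : Tendsto (fun x => rr (x/2)) (nhdsWithin 0 (Ioi 0)) (nhds (-1/6)) :=
  tendsto_rr.comp tendsto_half

lemma tendsto_x2 : Tendsto (fun x : ℝ => x^2) (nhdsWithin 0 (Ioi 0)) (nhds 0) := by
  simpa using ((continuous_pow 2).tendsto (0:ℝ)).mono_left nhdsWithin_le_nhds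

/-- `A(x) = 4 sin x sin²(x/2)/x³`. -/
def Af (x : ℝ) : ℝ := 4*sin x*sin (x/2)^2/x^3
/-- `B(e) = sin e cos²(e/2)/e`. -/
def Bf (e : ℝ) : ℝ := sin e * cos (e/2)^2/e
/-- `C(x) = (cos x − cos 2x)/((3/2)x²)`. -/
def Cf (x : ℝ) : ℝ := (cos x - cos (2*x))/((3/2)*x^2)

lemma lemA : Tendsto (fun x : ℝ => (Af x - 1)/x^2)
    (nhdsWithin 0 (Ioi 0)) (nhds (-1/4)) := by
  have heq : ∀ x ∈ Ioi (0:ℝ), (Af x - 1)/x^2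
      = rr (x/2)/2 + rr x + x^2*(rr (x/2)^2/16 + rr x * rr (x/2)/2 + x^2 * (rr x * rr (x/2)^2)/16) := by
    intro x hx
    have hx0 : (x:ℝ) ≠ 0 := ne_of_gt hx
    have hx2 : (x/2 : ℝ) ≠ 0 := by positivity
    rw [Af, sin_eq_rr hx0, sin_eq_rr hx2]
    field_simp
    ring
  have h : Tendsto (fun x : ℝ => rr (x/2)/2 + rr x + x^2*(rr (x/2)^2/16 + rr x * rr (x/2)/2 + x^2 * (rr x * rr (x/2)^2)/16))
      (nhdsWithin 0 (Ioi 0)) (nhds ((-1/6)/2 + (-1/6) + 0*((-1/6)^2/16 + (-1/6)*(-1/6)/2 + 0*((-1/6)*(-1/6)^2)/16))) := by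
    exact ((tendsto_rr2.div_const 2).add tendsto_rr).add
      (tendsto_x2.mul ((((tendsto_rr2.pow 2).div_const 16).add
        ((tendsto_rr.mul tendsto_rr2).div_const 2)).add
        ((tendsto_x2.mul (tendsto_rr.mul (tendsto_rr2.pow 2))).div_const 16)))
  norm_num at h ⊢
  exact h.congr' (by filter_upwards [self_mem_nhdsWithin] with x hx; exact (heq x hx).symm)

lemma cos_diff (x : ℝ) : cos x - cos (2*x) = 2*sin x^2 - 2*sin (x/2)^2 := by
  have h1 : Real.cos (2*(x/2)) = 2 * Real.cos (x/2)^2 - 1 := Real.cos_two_mul _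
  have h2 : Real.cos (2*x) = 2*Real.cos x^2 - 1 := Real.cos_two_mul _
  rw [show 2*(x/2) = x by ring] at h1
  rw [h1, h2, Real.cos_sq', Real.cos_sq']
  ring

lemma lemC2 : Tendsto (fun x : ℝ => (Cf x - 1)/x^2)
    (nhdsWithin 0 (Ioi 0)) (nhds (-5/12)) := by
  have heq : ∀ x ∈ Ioi (0:ℝ), (Cf x - 1)/x^2
      = (8/3)*rr x - rr (x/2)/6 + x^2*((4/3)*rr x^2 - rr (x/2)^2/48) := by
    intro x hx
    have hx0 : (x:ℝ) ≠ 0 := ne_of_gt hx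
    have hx2 : (x/2 : ℝ) ≠ 0 := by positivity
    rw [Cf, cos_diff, sin_eq_rr hx0, sin_eq_rr hx2]
    field_simp
    ring
  have h : Tendsto (fun x : ℝ => (8/3)*rr x - rr (x/2)/6 + x^2*((4/3)*rr x^2 - rr (x/2)^2/48))
      (nhdsWithin 0 (Ioi 0)) (nhds ((8/3)*(-1/6) - (-1/6)/6 + 0*((4/3)*(-1/6)^2 - (-1/6)^2/48))) := by
    exact (((tendsto_const_nhds.mul tendsto_rr)).sub (tendsto_rr2.div_const 6)).add
      (tendsto_x2.mul ((tendsto_const_nhds.mul (tendsto_rr.pow 2)).sub ((tendsto_rr2.pow 2).div_const 48)))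
  norm_num at h ⊢
  exact h.congr' (by filter_upwards [self_mem_nhdsWithin] with x hx; exact (heq x hx).symm)

lemma tendsto_A1 : Tendsto Af (nhdsWithin 0 (Ioi 0)) (nhds 1) := by
  have h := tendsto_x2.mul lemA
  have heq : (fun x : ℝ => x^2 * ((Af x - 1)/x^2)) =ᶠ[nhdsWithin (0:ℝ) (Ioi 0)]
      (fun x : ℝ => Af x - 1) := by
    filter_upwards [self_mem_nhdsWithin] with x (hx : x ∈ Ioi (0:ℝ))
    have hx0 : (x:ℝ) ≠ 0 := ne_of_gt hx
    field_simp
  have h2 : Tendsto (fun x : ℝ => Af x - 1) (nhdsWithin 0 (Ioi 0)) (nhds 0) := by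
    simpa using h.congr' heq
  have := h2.add (tendsto_const_nhds (x := (1:ℝ)))
  simpa using this

lemma tendsto_C1 : Tendsto Cf (nhdsWithin 0 (Ioi 0)) (nhds 1) := by
  have h := tendsto_x2.mul lemC2
  have heq : (fun x : ℝ => x^2 * ((Cf x - 1)/x^2)) =ᶠ[nhdsWithin (0:ℝ) (Ioi 0)]
      (fun x : ℝ => Cf x - 1) := by
    filter_upwards [self_mem_nhdsWithin] with x (hx : x ∈ Ioi (0:ℝ))
    have hx0 : (x:ℝ) ≠ 0 := ne_of_gt hx
    field_simp
  have h2 : Tendsto (fun x : ℝ => Cf x - 1) (nhdsWithin 0 (Ioi 0)) (nhds 0) := by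
    simpa using h.congr' heq
  have := h2.add (tendsto_const_nhds (x := (1:ℝ)))
  simpa using this

lemma lemB {e : ℝ} (he0 : 0 < e) (he1 : e ≤ 1) : |Bf e - 1| ≤ e^2 := by
  have habs : |e| ≤ 1 := by rw [abs_of_pos he0]; exact he1
  have h2 := Real.sin_bound habs
  rw [abs_of_pos he0] at h2
  have hb1 : |sin e - e| ≤ e^3 * (21/96) := by
    have h3 : |sin e - e| ≤ |sin e - (e - e^3/6)| + |e^3/6| := by
      have h5 : sin e - e = (sin e - (e - e^3/6)) + -(e^3/6) := by ring
      rw [h5]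
      exact (abs_add_le _ _).trans (by rw [abs_neg])
    have h4 : |e^3/6| = e^3/6 := abs_of_nonneg (by positivity)
    have h5 : e^4 ≤ e^3 := by nlinarith [pow_pos he0 3]
    rw [h4] at h3
    calc |sin e - e| ≤ e^4*(5/96) + e^3/6 := by nlinarith [pow_pos he0 4, mul_le_mul_of_nonneg_left he1 (pow_pos he0 4).le]
      _ ≤ e^3*(21/96) := by nlinarith
  have hb2 : |sin e * sin (e/2)^2| ≤ e^3/4 := by
    rw [abs_mul]
    have h6 : |sin (e/2)^2| = sin (e/2)^2 := abs_of_nonneg (sq_nonneg _)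
    calc |sin e| * |sin (e/2)^2| ≤ |e| * (e/2)^2 := by
          rw [h6]
          exact mul_le_mul Real.abs_sin_le_abs Real.sin_sq_le_sq (sq_nonneg _) (abs_nonneg _)
      _ = e^3/4 := by rw [abs_of_pos he0]; ring
  have heq : Bf e - 1 = ((sin e - e) - sin e * sin (e/2)^2)/e := by
    have hc : Real.cos (e/2)^2 = 1 - Real.sin (e/2)^2 := Real.cos_sq' _
    rw [Bf, hc]; field_simp; ring
  rw [heq, abs_div, abs_of_pos he0, div_le_iff₀ he0]
  calc |(sin e - e) - sin e*sin (e/2)^2| ≤ |sin e - e| + |sin e * sin (e/2)^2| := abs_sub _ _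
    _ ≤ e^3*(21/96) + e^3/4 := add_le_add hb1 hb2
    _ ≤ e^2*e := by nlinarith

lemma tendsto_B1 : Tendsto Bf (nhdsWithin 0 (Ioi 0)) (nhds 1) := by
  have h2 : Tendsto (fun e : ℝ => Bf e - 1) (nhdsWithin 0 (Ioi 0)) (nhds 0) := by
    apply squeeze_zero_norm' (a := fun e : ℝ => e^2)
    · filter_upwards [Ioc_mem_nhdsGT_of_mem (Set.left_mem_Ico.mpr one_pos)] with e he
      exact lemB he.1 he.2
    · exact tendsto_x2
  have := h2.add (tendsto_const_nhds (x := (1:ℝ)))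
  simpa using this

lemma rpow23_close {b : ℝ} (hb : 0 < b) : |b^((2:ℝ)/3) - 1| ≤ |b - 1| := by
  rcases le_total b 1 with h | h
  · have h1 : b^((2:ℝ)/3) ≤ 1 := Real.rpow_le_one hb.le h (by norm_num)
    have h2 : b ≤ b^((2:ℝ)/3) := by
      have := Real.rpow_le_rpow_of_exponent_ge hb h (by norm_num : (2:ℝ)/3 ≤ 1)
      rwa [Real.rpow_one] at this
    rw [abs_of_nonpos (by linarith), abs_of_nonpos (by linarith)]; linarith
  · have h1 : 1 ≤ b^((2:ℝ)/3) := Real.one_le_rpow h (by norm_num)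
    have h2 : b^((2:ℝ)/3) ≤ b := by
      have := Real.rpow_le_rpow_of_exponent_le h (by norm_num : (2:ℝ)/3 ≤ 1)
      rwa [Real.rpow_one] at this
    rw [abs_of_nonneg (by linarith), abs_of_nonneg (by linarith)]; linarith

lemma tendsto_slope23 : Tendsto (fun a : ℝ => (a^(-(2:ℝ)/3) - 1)/(a - 1))
    (nhdsWithin 1 {(1:ℝ)}ᶜ) (nhds (-(2:ℝ)/3)) := by
  have hd : HasDerivAt (fun a : ℝ => a^(-(2:ℝ)/3)) (-(2:ℝ)/3 * (1:ℝ)^(-(2:ℝ)/3 - 1)) 1 :=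
    Real.hasDerivAt_rpow_const (Or.inl one_ne_zero)
  rw [hasDerivAt_iff_tendsto_slope] at hd
  rw [Real.one_rpow, mul_one] at hd
  apply hd.congr
  intro a
  simp only [slope_def_field, Real.one_rpow]

lemma key_identity {n s e c a b : ℝ} (hs : 0 < s) (he : 0 < e) (ha : 0 < a) (hb : 0 < b)
    (hc : c ≠ 0) (hrel : e * b = s^3 * a / 4) :
    n/((3/2)*s^2*c) + (4:ℝ)^((1:ℝ)/3)/3 * e^(-(2:ℝ)/3) + 1/3
      = 2/(3*c) * ((n+2)/s^2 + 2*((c*a^(-(2:ℝ)/3) - 1)/s^2 * b^((2:ℝ)/3)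
          + (b^((2:ℝ)/3)-1)/s^2)) + 1/3 := by
  have h23 : -(2:ℝ)/3 = -((2:ℝ)/3) := by norm_num
  have ha2 : (0:ℝ) < a^((2:ℝ)/3) := Real.rpow_pos_of_pos ha _
  have hb2 : (0:ℝ) < b^((2:ℝ)/3) := Real.rpow_pos_of_pos hb _
  have he2 : (0:ℝ) < e^((2:ℝ)/3) := Real.rpow_pos_of_pos he _
  have hq1 : (0:ℝ) < (4:ℝ)^((1:ℝ)/3) := Real.rpow_pos_of_pos (by norm_num) _
  have hq2 : (0:ℝ) < (4:ℝ)^((2:ℝ)/3) := Real.rpow_pos_of_pos (by norm_num) _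
  have hs32 : ((s^3 : ℝ))^((2:ℝ)/3) = s^2 := by
    have h3 : ((3:ℕ):ℝ) * ((2:ℝ)/3) = ((2:ℕ):ℝ) := by norm_num
    rw [← Real.rpow_natCast s 3, ← Real.rpow_mul hs.le, h3, Real.rpow_natCast]
  have he23 : e^((2:ℝ)/3) * b^((2:ℝ)/3) = s^2 * a^((2:ℝ)/3) / 4^((2:ℝ)/3) := by
    rw [← Real.mul_rpow he.le hb.le, hrel,
      Real.div_rpow (by positivity) (by norm_num : (0:ℝ) ≤ 4),
      Real.mul_rpow (by positivity) ha.le, hs32]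
  have hene : e^(-(2:ℝ)/3) = 4^((2:ℝ)/3) * b^((2:ℝ)/3) / (s^2 * a^((2:ℝ)/3)) := by
    rw [h23, Real.rpow_neg he.le, eq_div_iff (by positivity)]
    rw [inv_mul_eq_div, div_eq_iff (ne_of_gt he2)]
    have he23' : e^((2:ℝ)/3) * b^((2:ℝ)/3) * 4^((2:ℝ)/3) = s^2 * a^((2:ℝ)/3) := by
      rw [he23]; field_simp
    linear_combination -1 * he23'
  have hq2e : (4:ℝ)^((2:ℝ)/3) = 4/(4:ℝ)^((1:ℝ)/3) := by
    rw [eq_div_iff (ne_of_gt hq1), ← Real.rpow_add (by norm_num : (0:ℝ) < 4)]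
    norm_num
  have hane : a^(-(2:ℝ)/3) = (a^((2:ℝ)/3))⁻¹ := by
    rw [h23, Real.rpow_neg ha.le]
  rw [hene, hane, hq2e]
  field_simp
  ring

/-- Pointwise facts valid near `π⁻`. -/
lemma facts {t : ℝ} (ht : t ∈ Ioo (2*π/3) π) (hsJ : Jfun t ∈ Ioo 0 1)
    (heE : π - t ∈ Ioo 0 1) :
    (π - t) * Bf (π - t) = (Jfun t)^3 * Af (Jfun t)/4 ∧
    0 < Af (Jfun t) ∧ Af (Jfun t) < 1 ∧ 0 < Bf (π - t) ∧ 0 < Cf (Jfun t) ∧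
    cos (Jfun t) - cos (2 * Jfun t) = (3/2)*(Jfun t)^2*Cf (Jfun t) ∧
    0 ≤ cos t - cos (2*t) + 2 ∧ cos t - cos (2*t) + 2 ≤ (5/2)*(π-t)^2 := by
  have hπ := Real.pi_gt_three
  set s := Jfun t with hsdef
  set e := π - t with hedef
  have hs0 : 0 < s := hsJ.1
  have hs1 : s < 1 := hsJ.2
  have he0 : 0 < e := heE.1
  have he1 : e < 1 := heE.2
  have hsins : 0 < sin s := Real.sin_pos_of_pos_of_lt_pi hs0 (by linarith)
  have hsins2 : 0 < sin (s/2) := Real.sin_pos_of_pos_of_lt_pi (by linarith) (by linarith)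
  have hsine : 0 < sin e := Real.sin_pos_of_pos_of_lt_pi he0 (by linarith)
  have hcose : 0 < cos (e/2) := Real.cos_pos_of_mem_Ioo ⟨by linarith, by linarith⟩
  -- relation
  have hrel : e * Bf e = s^3 * Af s/4 := by
    have h1 : e * Bf e = sin e * cos (e/2)^2 := by
      rw [Bf]; field_simp
    have h2 : s^3 * Af s/4 = sin s * sin (s/2)^2 := by
      rw [Af]; field_simp
    have h3 := (Jfun_spec ht).2
    have h4 : sin t = sin e := by rw [hedef, Real.sin_pi_sub]
    have h5 : Real.sin (t/2) = Real.cos (e/2) := by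
      rw [show t/2 = π/2 - e/2 by rw [hedef]; ring, Real.sin_pi_div_two_sub]
    rw [h1, h2]
    unfold ff at h3
    rw [h3, h4, h5]
  have hA0 : 0 < Af s := by rw [Af]; positivity
  have hA1 : Af s < 1 := by
    rw [Af, div_lt_one (by positivity)]
    have h1 : sin s < s := Real.sin_lt hs0
    have h2 : sin (s/2)^2 ≤ (s/2)^2 := Real.sin_sq_le_sq
    have h3 : 4*sin s*sin (s/2)^2 ≤ 4*sin s*(s/2)^2 :=
      mul_le_mul_of_nonneg_left h2 (by positivity)
    have h4 : sin s * s^2 < s * s^2 := mul_lt_mul_of_pos_right h1 (by positivity)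
    nlinarith
  have hB0 : 0 < Bf e := by rw [Bf]; positivity
  have hCnum : 0 < cos s - cos (2*s) := by
    rw [cos_diff]
    have hmono := Real.strictMonoOn_sin (a := s/2) (b := s)
    have h1 : sin (s/2) < sin s := by
      apply Real.strictMonoOn_sin ⟨by linarith, by linarith⟩ ⟨by linarith, by linarith⟩
      linarith
    nlinarith
  have hC0 : 0 < Cf s := by
    rw [Cf]
    apply div_pos hCnum (by positivity)
  have hCdef : cos s - cos (2 * s) = (3/2)*s^2*Cf s := by
    rw [Cf]; field_simp
  -- N bounds
  have hN : cos t - cos (2*t) + 2 = 2*sin (e/2)^2 + 2*sin e^2 := by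
    have e1 := Real.cos_pi_sub e
    rw [show π - e = t by rw [hedef]; ring] at e1
    have e2 : Real.cos (2*t) = Real.cos (2*e) := by
      rw [show (2*e : ℝ) = 2*π - 2*t by rw [hedef]; ring, Real.cos_two_pi_sub]
    have e3 : Real.cos e = 1 - 2*Real.sin (e/2)^2 := by
      have h := Real.cos_two_mul (e/2)
      rw [show 2*(e/2) = e by ring] at h
      rw [h, Real.cos_sq']; ring
    have e4 : Real.cos (2*e) = 1 - 2*Real.sin e^2 := by
      rw [Real.cos_two_mul, Real.cos_sq']; ring
    have e5 : cos t = -cos e := by linarith [e1]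
    rw [e5, e2, e3, e4]; ring
  have hN0 : 0 ≤ cos t - cos (2*t) + 2 := by rw [hN]; positivity
  have hN2 : cos t - cos (2*t) + 2 ≤ (5/2)*e^2 := by
    rw [hN]
    have h1 : sin (e/2)^2 ≤ (e/2)^2 := Real.sin_sq_le_sq
    have h2 : sin e^2 ≤ e^2 := Real.sin_sq_le_sq
    nlinarith
  exact ⟨hrel, hA0, hA1, hB0, hC0, hCdef, hN0, hN2⟩

end Stmt6Aux


theorem stmt6' :
    Filter.Tendsto (fun t : ℝ =>
      (Real.cos t - Real.cos (2 * t)) / (Real.cos (Jfun t) - Real.cos (2 * Jfun t))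
        + ((4 : ℝ) ^ ((1 : ℝ) / 3) / 3) * (Real.pi - t) ^ (-(2 : ℝ) / 3) + 1 / 3)
      (nhdsWithin Real.pi (Set.Iio Real.pi)) (nhds 0) := by
  have hπ := Real.pi_gt_three
  set l := nhdsWithin π (Set.Iio π) with hl
  have hJ : Filter.Tendsto Jfun l (nhdsWithin 0 (Ioi 0)) := Stmt6Aux.tendsto_J
  have hε : Filter.Tendsto (fun t : ℝ => π - t) l (nhdsWithin 0 (Ioi 0)) := by
    rw [tendsto_nhdsWithin_iff]
    constructor
    · have h : Filter.Tendsto (fun t : ℝ => π - t) (nhds π) (nhds (π - π)) :=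
        tendsto_const_nhds.sub tendsto_id
      simpa using h.mono_left nhdsWithin_le_nhds
    · filter_upwards [self_mem_nhdsWithin] with t ht
      exact Set.mem_Ioi.mpr (sub_pos.mpr (Set.mem_Iio.mp ht))
  have hev0 : ∀ᶠ t in l, t ∈ Ioo (2*π/3) π := by
    filter_upwards [Ioo_mem_nhdsLT (show 2*π/3 < π by linarith)] with t ht
    exact ht
  have hevJ : ∀ᶠ t in l, Jfun t ∈ Ioo 0 1 := hJ.eventually_mem (Ioo_mem_nhdsGT one_pos)
  have hevE : ∀ᶠ t in l, (π - t) ∈ Ioo 0 1 := hε.eventually_mem (Ioo_mem_nhdsGT one_pos)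
  have hAt : Filter.Tendsto (fun t => Stmt6Aux.Af (Jfun t)) l (nhds 1) :=
    Stmt6Aux.tendsto_A1.comp hJ
  have hBt : Filter.Tendsto (fun t => Stmt6Aux.Bf (π - t)) l (nhds 1) :=
    Stmt6Aux.tendsto_B1.comp hε
  have hCt : Filter.Tendsto (fun t => Stmt6Aux.Cf (Jfun t)) l (nhds 1) :=
    Stmt6Aux.tendsto_C1.comp hJ
  have hJ4 : Filter.Tendsto (fun t => (Jfun t)^4) l (nhds 0) := by
    have h := ((continuous_pow 4).tendsto (0:ℝ)).comp (hJ.mono_right nhdsWithin_le_nhds)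
    simpa [Function.comp_def] using h
  have hratio : Filter.Tendsto (fun t => (π - t)^2/(Jfun t)^2) l (nhds 0) := by
    have h : Filter.Tendsto
        (fun t => (Jfun t)^4 * (Stmt6Aux.Af (Jfun t))^2/(16*(Stmt6Aux.Bf (π - t))^2)) l
        (nhds ((0:ℝ) * 1^2/(16*1^2))) :=
      (hJ4.mul (hAt.pow 2)).div (tendsto_const_nhds.mul (hBt.pow 2)) (by norm_num)
    norm_num at h
    apply h.congr'
    filter_upwards [hev0, hevJ, hevE] with t ht hs he
    obtain ⟨hrel, hA0, hA1, hB0, hC0, hD, hN0, hN2⟩ := Stmt6Aux.facts ht hs he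
    have hsne : (Jfun t) ≠ 0 := ne_of_gt hs.1
    have hBne : Stmt6Aux.Bf (π - t) ≠ 0 := ne_of_gt hB0
    rw [div_eq_div_iff (by positivity) (by positivity : ((Jfun t)^2 : ℝ) ≠ 0)]
    linear_combination (-4*((Jfun t)^3*Stmt6Aux.Af (Jfun t)
      + 4*(π - t)*Stmt6Aux.Bf (π - t))) * hrel
  have hF1 : Filter.Tendsto (fun t => (cos t - cos (2*t) + 2)/(Jfun t)^2) l (nhds 0) := by
    have hub : Filter.Tendsto (fun t => (5/2)*((π - t)^2/(Jfun t)^2)) l (nhds 0) := by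
      simpa using hratio.const_mul ((5:ℝ)/2)
    apply tendsto_of_tendsto_of_tendsto_of_le_of_le' tendsto_const_nhds hub
    · filter_upwards [hev0, hevJ, hevE] with t ht hs he
      obtain ⟨_, _, _, _, _, _, hN0, _⟩ := Stmt6Aux.facts ht hs he
      exact div_nonneg hN0 (sq_nonneg _)
    · filter_upwards [hev0, hevJ, hevE] with t ht hs he
      obtain ⟨_, _, _, _, _, _, _, hN2⟩ := Stmt6Aux.facts ht hs he
      rw [← mul_div_assoc]
      exact (div_le_div_iff_of_pos_right (pow_pos hs.1 2)).mpr hN2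
  have hslopeA : Filter.Tendsto
      (fun t => ((Stmt6Aux.Af (Jfun t))^(-(2:ℝ)/3) - 1)/(Stmt6Aux.Af (Jfun t) - 1)) l
      (nhds (-(2:ℝ)/3)) := by
    apply Stmt6Aux.tendsto_slope23.comp
    rw [tendsto_nhdsWithin_iff]
    refine ⟨hAt, ?_⟩
    filter_upwards [hev0, hevJ, hevE] with t ht hs he
    obtain ⟨_, _, hA1, _⟩ := Stmt6Aux.facts ht hs he
    simp only [Set.mem_compl_iff, Set.mem_singleton_iff]
    exact ne_of_lt hA1
  have hCJ2 : Filter.Tendsto (fun t => (Stmt6Aux.Cf (Jfun t) - 1)/(Jfun t)^2) l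
      (nhds (-5/12)) := Stmt6Aux.lemC2.comp hJ
  have hAJ2 : Filter.Tendsto (fun t => (Stmt6Aux.Af (Jfun t) - 1)/(Jfun t)^2) l
      (nhds (-1/4)) := Stmt6Aux.lemA.comp hJ
  have hAm : Filter.Tendsto (fun t => (Stmt6Aux.Af (Jfun t))^(-(2:ℝ)/3)) l (nhds 1) := by
    have hc : ContinuousAt (fun a : ℝ => a^(-(2:ℝ)/3)) 1 :=
      Real.continuousAt_rpow_const 1 _ (Or.inl one_ne_zero)
    have h := hc.tendsto.comp hAt
    simpa [Real.one_rpow, Function.comp_def] using h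
  have hF2 : Filter.Tendsto
      (fun t => (Stmt6Aux.Cf (Jfun t) * (Stmt6Aux.Af (Jfun t))^(-(2:ℝ)/3) - 1)/(Jfun t)^2) l
      (nhds (-1/4)) := by
    have h : Filter.Tendsto
        (fun t => (Stmt6Aux.Cf (Jfun t) - 1)/(Jfun t)^2 * (Stmt6Aux.Af (Jfun t))^(-(2:ℝ)/3)
          + ((Stmt6Aux.Af (Jfun t))^(-(2:ℝ)/3) - 1)/(Stmt6Aux.Af (Jfun t) - 1)
            * ((Stmt6Aux.Af (Jfun t) - 1)/(Jfun t)^2)) l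
        (nhds ((-5/12) * 1 + (-(2:ℝ)/3) * (-1/4))) :=
      (hCJ2.mul hAm).add (hslopeA.mul hAJ2)
    have hval : ((-5:ℝ)/12) * 1 + (-(2:ℝ)/3) * (-1/4) = -1/4 := by norm_num
    rw [hval] at h
    apply h.congr'
    filter_upwards [hev0, hevJ, hevE] with t ht hs he
    obtain ⟨_, hA0, hA1, _⟩ := Stmt6Aux.facts ht hs he
    have hAne : Stmt6Aux.Af (Jfun t) - 1 ≠ 0 := sub_ne_zero.mpr (ne_of_lt hA1)
    have hsne : ((Jfun t)^2 : ℝ) ≠ 0 := pow_ne_zero 2 (ne_of_gt hs.1)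
    field_simp
    ring
  have hF5 : Filter.Tendsto (fun t => (Stmt6Aux.Bf (π - t))^((2:ℝ)/3)) l (nhds 1) := by
    have hc : ContinuousAt (fun a : ℝ => a^((2:ℝ)/3)) 1 :=
      Real.continuousAt_rpow_const 1 _ (Or.inl one_ne_zero)
    have h := hc.tendsto.comp hBt
    simpa [Real.one_rpow, Function.comp_def] using h
  have hF3 : Filter.Tendsto
      (fun t => ((Stmt6Aux.Bf (π - t))^((2:ℝ)/3) - 1)/(Jfun t)^2) l (nhds 0) := by
    apply squeeze_zero_norm' _ hratio
    filter_upwards [hev0, hevJ, hevE] with t ht hs he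
    obtain ⟨_, _, _, hB0, _⟩ := Stmt6Aux.facts ht hs he
    rw [Real.norm_eq_abs, abs_div, abs_of_pos (pow_pos hs.1 2)]
    apply (div_le_div_iff_of_pos_right (pow_pos hs.1 2)).mpr
    calc |(Stmt6Aux.Bf (π - t))^((2:ℝ)/3) - 1| ≤ |Stmt6Aux.Bf (π - t) - 1| :=
          Stmt6Aux.rpow23_close hB0
      _ ≤ (π - t)^2 := Stmt6Aux.lemB he.1 (le_of_lt he.2)
  have hG : Filter.Tendsto (fun t =>
      2/(3*Stmt6Aux.Cf (Jfun t)) * ((cos t - cos (2*t) + 2)/(Jfun t)^2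
        + 2*((Stmt6Aux.Cf (Jfun t) * (Stmt6Aux.Af (Jfun t))^(-(2:ℝ)/3) - 1)/(Jfun t)^2
              * (Stmt6Aux.Bf (π - t))^((2:ℝ)/3)
            + ((Stmt6Aux.Bf (π - t))^((2:ℝ)/3) - 1)/(Jfun t)^2)) + 1/3) l (nhds 0) := by
    have h := (((tendsto_const_nhds (x := (2:ℝ))).div (tendsto_const_nhds.mul hCt)
        (by norm_num : (3:ℝ)*1 ≠ 0)).mul
      (hF1.add (((hF2.mul hF5).add hF3).const_mul 2))).add
      (tendsto_const_nhds (x := (1:ℝ)/3))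
    convert h using 2
    all_goals norm_num
  apply hG.congr'
  filter_upwards [hev0, hevJ, hevE] with t ht hs he
  obtain ⟨hrel, hA0, hA1, hB0, hC0, hD, _, _⟩ := Stmt6Aux.facts ht hs he
  rw [hD]
  exact (Stmt6Aux.key_identity hs.1 he.1 hA0 hB0 (ne_of_gt hC0) hrel).symm


/-- As `t → π⁻`,
`(cos t − cos 2t)/(cos J(t) − cos 2J(t)) + (4^{1/3}/3)(π−t)^{−2/3} + 1/3 → 0`. -/
theorem stmt6 :
    Filter.Tendsto (fun t : ℝ =>
      (Real.cos t - Real.cos (2 * t)) / (Real.cos (Jfun t) - Real.cos (2 * Jfun t))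
        + ((4 : ℝ) ^ ((1 : ℝ) / 3) / 3) * (Real.pi - t) ^ (-(2 : ℝ) / 3) + 1 / 3)
      (nhdsWithin Real.pi (Set.Iio Real.pi)) (nhds 0) := by
  exact stmt6'
end
end

section
/- There exists a constant C > 0 such that for all integers n ≥ 1: |(n+1)·J(π − π/(n+1)) − (4π)^{1/3}·(n+1)^{2/3} − π/3| ≤ C·(n+1)^{−2/3}. -/
noncomputable section

open Real

/-- helper: nonneg on `Ici 0` from derivative. -/
private lemma nonneg_of_deriv' {g g' : ℝ → ℝ} (hg : ∀ x, HasDerivAt g (g' x) x)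
    (h0 : g 0 = 0) (hd : ∀ x, 0 ≤ x → 0 ≤ g' x) : ∀ x, 0 ≤ x → 0 ≤ g x := by
  have hmono : MonotoneOn g (Set.Ici 0) := by
    refine monotoneOn_of_deriv_nonneg (convex_Ici 0)
      (fun y _ => (hg y).continuousAt.continuousWithinAt)
      (fun y _ => (hg y).differentiableAt.differentiableWithinAt) ?_
    intro y hy
    rw [(hg y).deriv]
    rw [interior_Ici] at hy
    exact hd y (le_of_lt hy)
  intro x hx
  have := hmono (Set.self_mem_Ici) (Set.mem_Ici.2 hx) hx
  linarith [this, h0.symm.le]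

private lemma cos_ge_quad {x : ℝ} (hx : 0 ≤ x) : 1 - x^2/2 ≤ Real.cos x := by
  have hg : ∀ y : ℝ, HasDerivAt (fun z => Real.cos z - 1 + z^2/2) (y - Real.sin y) y := by
    intro y
    have h := ((Real.hasDerivAt_cos y).sub_const 1).add ((hasDerivAt_pow 2 y).div_const 2)
    refine h.congr_deriv ?_
    push_cast; ring
  have := nonneg_of_deriv' hg (by norm_num) (fun y hy => by
    have := Real.sin_le hy; linarith) x hx
  linarith

private lemma sin_ge_cubic {x : ℝ} (hx : 0 ≤ x) : x - x^3/6 ≤ Real.sin x := by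
  have hg : ∀ y : ℝ, HasDerivAt (fun z => Real.sin z - z + z^3/6)
      (Real.cos y - 1 + y^2/2) y := by
    intro y
    have h := ((Real.hasDerivAt_sin y).sub (hasDerivAt_id y)).add ((hasDerivAt_pow 3 y).div_const 6)
    refine h.congr_deriv ?_
    push_cast; ring
  have := nonneg_of_deriv' hg (by norm_num) (fun y hy => by
    have := cos_ge_quad hy; linarith) x hx
  linarith

private lemma cos_le_quart {x : ℝ} (hx : 0 ≤ x) : Real.cos x ≤ 1 - x^2/2 + x^4/24 := by
  have hg : ∀ y : ℝ, HasDerivAt (fun z => 1 - z^2/2 + z^4/24 - Real.cos z)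
      (Real.sin y - (y - y^3/6)) y := by
    intro y
    have h := (((hasDerivAt_const y (1:ℝ)).sub ((hasDerivAt_pow 2 y).div_const 2)).add
      ((hasDerivAt_pow 4 y).div_const 24)).sub (Real.hasDerivAt_cos y)
    refine h.congr_deriv ?_
    push_cast; ring
  have := nonneg_of_deriv' hg (by norm_num) (fun y hy => by
    have := sin_ge_cubic hy; linarith) x hx
  linarith

private lemma sin_le_quint {x : ℝ} (hx : 0 ≤ x) : Real.sin x ≤ x - x^3/6 + x^5/120 := by
  have hg : ∀ y : ℝ, HasDerivAt (fun z => z - z^3/6 + z^5/120 - Real.sin z)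
      (1 - y^2/2 + y^4/24 - Real.cos y) y := by
    intro y
    have h := (((hasDerivAt_id y).sub ((hasDerivAt_pow 3 y).div_const 6)).add
      ((hasDerivAt_pow 5 y).div_const 120)).sub (Real.hasDerivAt_sin y)
    refine h.congr_deriv ?_
    push_cast; ring
  have := nonneg_of_deriv' hg (by norm_num) (fun y hy => by
    have := cos_le_quart hy; linarith) x hx
  linarith

private lemma cos_ge_six {x : ℝ} (hx : 0 ≤ x) : 1 - x^2/2 + x^4/24 - x^6/720 ≤ Real.cos x := by
  have hg : ∀ y : ℝ, HasDerivAt (fun z => Real.cos z - (1 - z^2/2 + z^4/24 - z^6/720))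
      (y - y^3/6 + y^5/120 - Real.sin y) y := by
    intro y
    have h := (Real.hasDerivAt_cos y).sub ((((hasDerivAt_const y (1:ℝ)).sub
      ((hasDerivAt_pow 2 y).div_const 2)).add ((hasDerivAt_pow 4 y).div_const 24)).sub
      ((hasDerivAt_pow 6 y).div_const 720))
    refine h.congr_deriv ?_
    push_cast; ring
  have := nonneg_of_deriv' hg (by norm_num) (fun y hy => by
    have := sin_le_quint hy; linarith) x hx
  linarith

private lemma sin_ge_sept {x : ℝ} (hx : 0 ≤ x) :
    x - x^3/6 + x^5/120 - x^7/5040 ≤ Real.sin x := by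
  have hg : ∀ y : ℝ, HasDerivAt (fun z => Real.sin z - (z - z^3/6 + z^5/120 - z^7/5040))
      (Real.cos y - (1 - y^2/2 + y^4/24 - y^6/720)) y := by
    intro y
    have h := (Real.hasDerivAt_sin y).sub ((((hasDerivAt_id y).sub
      ((hasDerivAt_pow 3 y).div_const 6)).add ((hasDerivAt_pow 5 y).div_const 120)).sub
      ((hasDerivAt_pow 7 y).div_const 5040))
    refine h.congr_deriv ?_
    push_cast; ring
  have := nonneg_of_deriv' hg (by norm_num) (fun y hy => by
    have := cos_ge_six hy; linarith) x hx
  linarith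


/-- the key function -/
private def fS (s : ℝ) : ℝ := Real.sin s * Real.sin (s/2)^2

private lemma fS_eq (s : ℝ) : fS s = Real.sin s / 2 - Real.sin (2*s) / 4 := by
  have h1 : Real.sin (s/2)^2 = 1/2 - Real.cos (2*(s/2))/2 := Real.sin_sq_eq_half_sub (s/2)
  have h2 : (2:ℝ)*(s/2) = s := by ring
  rw [fS, h1, h2, Real.sin_two_mul]
  ring

private lemma fS_deriv (x : ℝ) :
    HasDerivAt fS (Real.sin (x/2) * Real.sin (3*x/2)) x := by
  have h1 : HasDerivAt (fun s : ℝ => Real.sin (s/2)) (Real.cos (x/2) * (1/2)) x := by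
    have := (Real.hasDerivAt_sin (x/2)).comp x ((hasDerivAt_id x).div_const 2)
    exact this
  have h2 := h1.pow 2
  have h3 := (Real.hasDerivAt_sin x).mul h2
  have h4 : Real.sin (3*x/2) = Real.sin x * Real.cos (x/2) + Real.cos x * Real.sin (x/2) := by
    have : (3:ℝ)*x/2 = x + x/2 := by ring
    rw [this, Real.sin_add]
  refine h3.congr_deriv ?_
  rw [h4]
  simp only [Pi.pow_apply]
  push_cast; ring

private lemma fS_mono : StrictMonoOn fS (Set.Icc 0 (2*π/3)) := by
  refine strictMonoOn_of_deriv_pos (convex_Icc _ _) ?_ ?_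
  · exact (Real.continuous_sin.mul ((Real.continuous_sin.comp
      (continuous_id.div_const 2)).pow 2)).continuousOn
  · intro x hx
    rw [interior_Icc, Set.mem_Ioo] at hx
    rw [(fS_deriv x).deriv]
    have hpi := Real.pi_gt_three
    have h1 : 0 < Real.sin (x/2) := Real.sin_pos_of_pos_of_lt_pi (by linarith [hx.1])
      (by nlinarith [hx.2])
    have h2 : 0 < Real.sin (3*x/2) := Real.sin_pos_of_pos_of_lt_pi (by linarith [hx.1])
      (by nlinarith [hx.2])
    positivity

private lemma fS_max (t : ℝ) : fS t ≤ fS (2*π/3) := by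
  have h1 : fS (2*π/3) = 3 * Real.sqrt 3 / 8 := by
    have e1 : (2*π/3) = π - π/3 := by ring
    have e2 : (2*π/3)/2 = π/3 := by ring
    rw [fS, e2, e1, Real.sin_pi_sub, Real.sin_pi_div_three]
    have h3 : Real.sqrt 3 ^ 2 = 3 := Real.sq_sqrt (by norm_num)
    rw [div_pow, h3]; ring
  rw [h1]
  have hid : fS t = Real.sin t * (1/2 - Real.cos t / 2) := by
    have h1 : Real.sin (t/2)^2 = 1/2 - Real.cos (2*(t/2))/2 := Real.sin_sq_eq_half_sub (t/2)
    have h2 : (2:ℝ)*(t/2) = t := by ring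
    rw [fS, h1, h2]
  rw [hid]
  have hc1 : -1 ≤ Real.cos t := Real.neg_one_le_cos t
  have hc2 : Real.cos t ≤ 1 := Real.cos_le_one t
  have hsc : Real.sin t ^2 + Real.cos t ^2 = 1 := Real.sin_sq_add_cos_sq t
  have key : (Real.sin t * (1/2 - Real.cos t / 2))^2 ≤ 27/64 := by
    nlinarith [sq_nonneg ((2*Real.cos t + 1)*(2*Real.cos t - 3)), sq_nonneg (2*Real.cos t + 1)]
  have h3 : Real.sqrt 3 ^ 2 = 3 := Real.sq_sqrt (by norm_num)
  have h4 : (1:ℝ) ≤ Real.sqrt 3 := by nlinarith [Real.sqrt_nonneg 3]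
  nlinarith [key, h3, h4]


private lemma Jfun_eq' {t s₀ : ℝ} (hs₀ : s₀ ∈ Set.Icc 0 (2*Real.pi/3)) (heq : fS s₀ = fS t) :
    (sInf {s : ℝ | s ∈ Set.Icc 0 (2 * Real.pi / 3) ∧
      Real.sin s * Real.sin (s / 2) ^ 2 = Real.sin t * Real.sin (t / 2) ^ 2}) = s₀ := by
  have hset : {s : ℝ | s ∈ Set.Icc 0 (2 * Real.pi / 3) ∧
      Real.sin s * Real.sin (s / 2) ^ 2 = Real.sin t * Real.sin (t / 2) ^ 2} = {s₀} := by
    ext s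
    simp only [Set.mem_setOf_eq, Set.mem_singleton_iff]
    constructor
    · rintro ⟨hmem, hfeq⟩
      have h1 : fS s = fS s₀ := by
        simp only [fS] at heq ⊢
        rw [hfeq, heq]
      exact fS_mono.injOn hmem hs₀ h1
    · rintro rfl
      simp only [fS] at heq
      exact ⟨hs₀, heq⟩
  rw [hset, csInf_singleton]

private lemma exists_s0 {t : ℝ} (h0 : 0 ≤ fS t) :
    ∃ s₀ ∈ Set.Icc 0 (2*Real.pi/3), fS s₀ = fS t := by
  have hcont : ContinuousOn fS (Set.Icc 0 (2*Real.pi/3)) :=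
    (Real.continuous_sin.mul ((Real.continuous_sin.comp
      (continuous_id.div_const 2)).pow 2)).continuousOn
  have hpi := Real.pi_gt_three
  have hsub := intermediate_value_Icc (by linarith : (0:ℝ) ≤ 2*π/3) hcont
  have hmem : fS t ∈ Set.Icc (fS 0) (fS (2*π/3)) := by
    constructor
    · have : fS 0 = 0 := by simp [fS]
      rw [this]; exact h0
    · exact fS_max t
  obtain ⟨s₀, hs₀, hfs₀⟩ := hsub hmem
  exact ⟨s₀, hs₀, hfs₀⟩



private lemma cpow_bound {c : ℝ} (hc0 : 0 ≤ c) (hc13 : c ≤ 1/3) :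
    ∀ i : ℕ, c^(7+i) ≤ (1/3:ℝ)^i * c^7 := by
  intro i
  calc c^(7+i) = c^i * c^7 := by ring
  _ ≤ (1/3:ℝ)^i * c^7 := by
    refine mul_le_mul_of_nonneg_right (pow_le_pow_left₀ hc0 hc13 i) (by positivity)

private lemma polyA {c : ℝ} (hc0 : 0 < c) (hc13 : c ≤ 1/3) :
    (c^3/4) - 5*(c^3/4)^3/12 + 17*(c^3/4)^5/120 ≤
    (c + c^3/12 + c^5/16)^3/4 - (c + c^3/12 + c^5/16)^5/16 - (c + c^3/12 + c^5/16)^7/10080 := by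
  have hb := cpow_bound hc0.le hc13
  nlinarith [hb 2, hb 4, hb 6, hb 8, hb 10, hb 12, hb 14, hb 16, hb 18, hb 20, hb 22,
    hb 24, hb 26, hb 28, pow_nonneg hc0.le 7]

private lemma polyB {c : ℝ} (hc0 : 0 < c) (hc13 : c ≤ 1/3) :
    (c + c^3/12 - c^5/16)^3/4 - (c + c^3/12 - c^5/16)^5/16 + 2*(c + c^3/12 - c^5/16)^7/315 ≤
    (c^3/4) - 5*(c^3/4)^3/12 := by
  have hb := cpow_bound hc0.le hc13
  nlinarith [hb 2, hb 4, hb 6, hb 8, hb 10, hb 12, hb 14, hb 16, hb 18, hb 20, hb 22,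
    hb 24, hb 26, hb 28, pow_nonneg hc0.le 7]

set_option maxHeartbeats 2000000 in
/-- `|(n+1)·J(π − π/(n+1)) − (4π)^{1/3}(n+1)^{2/3} − π/3| ≤ C (n+1)^{−2/3}`. -/
theorem stmt7 :
    ∃ C > (0 : ℝ), ∀ n : ℕ, 1 ≤ n →
      |((n : ℝ) + 1) * Jfun (Real.pi - Real.pi / ((n : ℝ) + 1))
          - (4 * Real.pi) ^ ((1 : ℝ) / 3) * ((n : ℝ) + 1) ^ ((2 : ℝ) / 3) - Real.pi / 3|
        ≤ C * ((n : ℝ) + 1) ^ (-(2 : ℝ) / 3) := by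
  refine ⟨1000000, by norm_num, ?_⟩
  intro n hn
  have hpi3 := Real.pi_gt_three
  have hpi315 := Real.pi_lt_d2
  set N : ℝ := (n : ℝ) + 1 with hNdef
  have hn1 : (1:ℝ) ≤ (n:ℝ) := by exact_mod_cast hn
  have hN2 : 2 ≤ N := by rw [hNdef]; linarith
  have hN0 : 0 < N := by linarith
  have hN1 : 1 ≤ N := by linarith
  set δ : ℝ := π / N with hδdef
  have hδ0 : 0 < δ := by positivity
  have hδle : δ ≤ π/2 := by
    rw [hδdef]
    exact div_le_div_of_nonneg_left (le_of_lt Real.pi_pos) (by norm_num) hN2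
  set t : ℝ := π - δ with htdef
  have hftpos : 0 ≤ fS t := by
    rw [fS]
    exact mul_nonneg (Real.sin_nonneg_of_nonneg_of_le_pi (by rw [htdef]; linarith)
      (by rw [htdef]; linarith)) (sq_nonneg _)
  obtain ⟨s₀, hs₀mem, hs₀⟩ := exists_s0 hftpos
  have hJ : Jfun t = s₀ := Jfun_eq' hs₀mem hs₀
  rw [hJ]
  have hs0ge : 0 ≤ s₀ := hs₀mem.1
  have hs0le : s₀ ≤ 2*π/3 := hs₀mem.2
  have hrpow1 : (0:ℝ) ≤ (4*π) ^ ((1:ℝ)/3) := Real.rpow_nonneg (by positivity) _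
  have hrpow2 : (0:ℝ) ≤ N ^ ((2:ℝ)/3) := Real.rpow_nonneg hN0.le _
  have hrpowneg : (0:ℝ) ≤ N ^ (-(2:ℝ)/3) := Real.rpow_nonneg hN0.le _
  clear_value t δ N
  by_cases hsmall : n ≤ 339
  · -- small case
    have hNle : N ≤ 340 := by
      have : (n:ℝ) ≤ 339 := by exact_mod_cast hsmall
      rw [hNdef]; linarith
    have h27 : ((27:ℝ)) ^ ((1:ℝ)/3) = 3 := by
      rw [show (27:ℝ) = 3^(3:ℕ) by norm_num, ← Real.rpow_natCast (3:ℝ) 3,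
        ← Real.rpow_mul (by norm_num : (0:ℝ) ≤ 3)]
      norm_num
    have h1 : (4*π) ^ ((1:ℝ)/3) ≤ 3 := by
      calc (4*π) ^ ((1:ℝ)/3) ≤ (27:ℝ) ^ ((1:ℝ)/3) :=
            Real.rpow_le_rpow (by positivity) (by linarith) (by norm_num)
        _ = 3 := h27
    have h2 : N ^ ((2:ℝ)/3) ≤ N := by
      have := Real.rpow_le_rpow_of_exponent_le hN1 (show (2:ℝ)/3 ≤ 1 by norm_num)
      rwa [Real.rpow_one] at this
    have hprod : (4*π) ^ ((1:ℝ)/3) * N ^ ((2:ℝ)/3) ≤ 3*N :=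
      mul_le_mul h1 h2 hrpow2 (by norm_num)
    have hprod0 : 0 ≤ (4*π) ^ ((1:ℝ)/3) * N ^ ((2:ℝ)/3) := mul_nonneg hrpow1 hrpow2
    have hNs1 : N * s₀ ≤ N * (2*π/3) := mul_le_mul_of_nonneg_left hs0le hN0.le
    have hNs2 : N * (2*π/3) ≤ 340 * (2*π/3) :=
      mul_le_mul_of_nonneg_right hNle (by positivity)
    have hNs0 : 0 ≤ N * s₀ := mul_nonneg hN0.le hs0ge
    have hinv : N ^ (-(1:ℝ)) ≤ N ^ (-(2:ℝ)/3) :=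
      Real.rpow_le_rpow_of_exponent_le hN1 (by norm_num)
    rw [Real.rpow_neg_one] at hinv
    have hinv2 : (340:ℝ)⁻¹ ≤ N⁻¹ := by
      have h := one_div_le_one_div_of_le hN0 hNle
      rwa [one_div, one_div] at h
    have hRHS : (1000000:ℝ) * (340:ℝ)⁻¹ ≤ 1000000 * N ^ (-(2:ℝ)/3) :=
      mul_le_mul_of_nonneg_left (le_trans hinv2 hinv) (by norm_num)
    rw [abs_le]
    constructor <;>
      linarith [hRHS, hNs1, hNs2, hNs0, hprod, hprod0, hrpowneg, Real.pi_pos]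
  · -- large case
    push_neg at hsmall
    have hN341 : 341 ≤ N := by
      have : (340:ℝ) ≤ (n:ℝ) := by exact_mod_cast hsmall
      rw [hNdef]; linarith
    have hδ108 : δ ≤ 1/108 := by
      rw [hδdef, div_le_div_iff₀ hN0 (by norm_num)]
      linarith
    set c : ℝ := (4*δ) ^ ((1:ℝ)/3) with hcdef
    clear_value c
    have h4δ0 : (0:ℝ) < 4*δ := by linarith
    have hc0 : 0 < c := by rw [hcdef]; exact Real.rpow_pos_of_pos h4δ0 _
    have hc3 : c^(3:ℕ) = 4*δ := by
      rw [hcdef, ← Real.rpow_natCast ((4*δ) ^ ((1:ℝ)/3)) 3, ← Real.rpow_mul h4δ0.le]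
      norm_num
    have hc13 : c ≤ 1/3 := by
      refine le_of_pow_le_pow_left₀ (by norm_num : (3:ℕ) ≠ 0) (by norm_num : (0:ℝ) ≤ 1/3) ?_
      rw [hc3]
      norm_num
      linarith
    have hδc : δ = c^3/4 := by
      have : c^3 = 4*δ := hc3
      linarith
    -- Taylor bounds on fS t
    have hft : fS t = Real.sin δ / 2 + Real.sin (2*δ) / 4 := by
      rw [fS_eq]
      have h1 : Real.sin t = Real.sin δ := by rw [htdef, Real.sin_pi_sub]
      have h2 : Real.sin (2*t) = - Real.sin (2*δ) := by
        have e : 2*t = 2*π - 2*δ := by rw [htdef]; ring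
        rw [e, Real.sin_sub, Real.sin_two_pi, Real.cos_two_pi]
        ring
      rw [h1, h2]
      ring
    have hsinδ_le := sin_le_quint hδ0.le
    have hsinδ_ge := sin_ge_cubic hδ0.le
    have hsin2δ_le := sin_le_quint (x := 2*δ) (by linarith)
    have hsin2δ_ge := sin_ge_cubic (x := 2*δ) (by linarith)
    have hU : fS t ≤ δ - 5*δ^3/12 + 17*δ^5/120 := by
      rw [hft]; linarith [hsinδ_le, hsin2δ_le]
    have hL : δ - 5*δ^3/12 ≤ fS t := by
      rw [hft]; linarith [hsinδ_ge, hsin2δ_ge]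
    set sp : ℝ := c + c^3/12 + c^5/16 with hspdef
    set sm : ℝ := c + c^3/12 - c^5/16 with hsmdef
    clear_value sp sm
    have hc4 : c^4 ≤ (1/3:ℝ)^4 := pow_le_pow_left₀ hc0.le hc13 4
    have hc3b : c^3 ≤ (1/3:ℝ)^3 := pow_le_pow_left₀ hc0.le hc13 3
    have hc5 : c^5 ≤ (1/3:ℝ)^5 := pow_le_pow_left₀ hc0.le hc13 5
    have hsp0 : 0 ≤ sp := by
      rw [hspdef]
      linarith [hc0.le, pow_nonneg hc0.le 3, pow_nonneg hc0.le 5]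
    have hsm0 : 0 ≤ sm := by
      rw [hsmdef]
      linarith [mul_le_mul_of_nonneg_left hc4 hc0.le, pow_nonneg hc0.le 3, hc0.le]
    have hsp23 : sp ≤ 2*π/3 := by
      rw [hspdef]
      linarith [hc13, hc3b, hc5, hpi3]
    have hq1 := sin_ge_sept hsp0
    have hq2 := sin_le_quint (x := 2*sp) (by linarith)
    have hfsp : sp^3/4 - sp^5/16 - sp^7/10080 ≤ fS sp := by
      rw [fS_eq]; linarith [hq1, hq2]
    have hq3 := sin_le_quint hsm0
    have hq4 := sin_ge_sept (x := 2*sm) (by linarith)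
    have hfsm : fS sm ≤ sm^3/4 - sm^5/16 + 2*sm^7/315 := by
      rw [fS_eq]; linarith [hq3, hq4]
    have hA := polyA hc0 hc13
    have hB := polyB hc0 hc13
    rw [hδc] at hU hL
    have hkey1 : fS t ≤ fS sp := by
      rw [hspdef] at hfsp ⊢
      calc fS t ≤ (c^3/4) - 5*(c^3/4)^3/12 + 17*(c^3/4)^5/120 := hU
        _ ≤ (c + c^3/12 + c^5/16)^3/4 - (c + c^3/12 + c^5/16)^5/16
            - (c + c^3/12 + c^5/16)^7/10080 := hA
        _ ≤ fS (c + c^3/12 + c^5/16) := hfsp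
    have hkey2 : fS sm ≤ fS t := by
      rw [hsmdef] at hfsm ⊢
      calc fS (c + c^3/12 - c^5/16) ≤ (c + c^3/12 - c^5/16)^3/4
            - (c + c^3/12 - c^5/16)^5/16 + 2*(c + c^3/12 - c^5/16)^7/315 := hfsm
        _ ≤ (c^3/4) - 5*(c^3/4)^3/12 := hB
        _ ≤ fS t := hL
    have hspmem : sp ∈ Set.Icc 0 (2*π/3) := ⟨hsp0, hsp23⟩
    have hsmmem : sm ∈ Set.Icc 0 (2*π/3) := ⟨hsm0, by
      rw [hsmdef]; rw [hspdef] at hsp23; linarith [pow_nonneg hc0.le 5]⟩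
    have hle1 : s₀ ≤ sp := by
      by_contra h
      push_neg at h
      have := fS_mono hspmem hs₀mem h
      rw [hs₀] at this
      linarith
    have hle2 : sm ≤ s₀ := by
      by_contra h
      push_neg at h
      have := fS_mono hs₀mem hsmmem h
      rw [hs₀] at this
      linarith
    -- rpow bookkeeping
    have h4δπ : 4*δ = 4*π/N := by rw [hδdef]; ring
    have hN13pos : 0 < N ^ ((1:ℝ)/3) := Real.rpow_pos_of_pos hN0 _
    have hN23pos : 0 < N ^ ((2:ℝ)/3) := Real.rpow_pos_of_pos hN0 _
    have hc' : c = (4*π) ^ ((1:ℝ)/3) / N ^ ((1:ℝ)/3) := by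
      rw [hcdef, h4δπ, Real.div_rpow (by positivity) hN0.le]
    have hN23 : N ^ ((2:ℝ)/3) * N ^ ((1:ℝ)/3) = N := by
      rw [← Real.rpow_add hN0]
      norm_num
    have hNc : N * c = (4*π) ^ ((1:ℝ)/3) * N ^ ((2:ℝ)/3) := by
      have hc'' : c = (4*π) ^ ((1:ℝ)/3) * N ^ (-((1:ℝ)/3)) := by
        rw [hc', Real.rpow_neg hN0.le, div_eq_mul_inv]
      have hNN : N * N ^ (-((1:ℝ)/3)) = N ^ ((2:ℝ)/3) := by
        nth_rewrite 1 [← Real.rpow_one N]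
        rw [← Real.rpow_add hN0]
        norm_num
      calc N * c = (4*π) ^ ((1:ℝ)/3) * (N * N ^ (-((1:ℝ)/3))) := by rw [hc'']; ring
        _ = (4*π) ^ ((1:ℝ)/3) * N ^ ((2:ℝ)/3) := by rw [hNN]
    have hπ3 : N * (c^3/12) = π/3 := by
      rw [hc3, hδdef]
      field_simp
      ring
    -- bound N * (c^5/16)
    have hc2eq : c^2 = (4*π) ^ ((2:ℝ)/3) / N ^ ((2:ℝ)/3) := by
      rw [hcdef, ← Real.rpow_natCast ((4*δ) ^ ((1:ℝ)/3)) 2, ← Real.rpow_mul h4δ0.le]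
      rw [show (1:ℝ)/3 * (2:ℕ) = (2:ℝ)/3 by push_cast; ring]
      rw [h4δπ, Real.div_rpow (by positivity) hN0.le]
    have h13sq : ((13:ℝ)) ^ ((2:ℝ)/3) ≤ 6 := by
      refine le_of_pow_le_pow_left₀ (by norm_num : (3:ℕ) ≠ 0) (by norm_num : (0:ℝ) ≤ 6) ?_
      rw [← Real.rpow_natCast ((13:ℝ) ^ ((2:ℝ)/3)) 3, ← Real.rpow_mul (by norm_num : (0:ℝ) ≤ 13)]
      rw [show (2:ℝ)/3 * (3:ℕ) = (2:ℕ) by push_cast; ring]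
      rw [Real.rpow_natCast]
      norm_num
    have h4π23 : (4*π) ^ ((2:ℝ)/3) ≤ 6 := by
      calc (4*π) ^ ((2:ℝ)/3) ≤ (13:ℝ) ^ ((2:ℝ)/3) :=
            Real.rpow_le_rpow (by positivity) (by linarith) (by norm_num)
        _ ≤ 6 := h13sq
    have hNneg : N ^ (-(2:ℝ)/3) = 1 / N ^ ((2:ℝ)/3) := by
      rw [neg_div, Real.rpow_neg hN0.le, one_div]
    have hNε : N * (c^5/16) ≤ 5 * N ^ (-(2:ℝ)/3) := by
      have e1 : N * (c^5/16) = π * c^2 / 4 := by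
        have e : c^5 = c^3 * c^2 := by ring
        rw [e, hc3, hδdef]
        field_simp
        ring
      rw [e1, hc2eq, hNneg]
      have h5 : π * (4*π) ^ ((2:ℝ)/3) / 4 ≤ 5 := by
        have h0 : (0:ℝ) ≤ (4*π) ^ ((2:ℝ)/3) := Real.rpow_nonneg (by positivity) _
        have hm : π * (4*π) ^ ((2:ℝ)/3) ≤ 3.15 * 6 :=
          mul_le_mul (le_of_lt hpi315) h4π23 h0 (by norm_num)
        linarith
      calc π * ((4*π) ^ ((2:ℝ)/3) / N ^ ((2:ℝ)/3)) / 4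
          = (π * (4*π) ^ ((2:ℝ)/3) / 4) * (1 / N ^ ((2:ℝ)/3)) := by ring
        _ ≤ 5 * (1 / N ^ ((2:ℝ)/3)) :=
            mul_le_mul_of_nonneg_right h5 (by positivity)
    -- final
    have hrw : N * s₀ - (4*π) ^ ((1:ℝ)/3) * N ^ ((2:ℝ)/3) - π/3 = N * (s₀ - (c + c^3/12)) := by
      rw [← hNc, ← hπ3]
      ring
    rw [hrw, abs_le]
    have hb1 : N * (s₀ - (c + c^3/12)) ≤ N * (c^5/16) := by
      apply mul_le_mul_of_nonneg_left _ hN0.le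
      rw [hspdef] at hle1
      linarith
    have hb2 : -(N * (c^5/16)) ≤ N * (s₀ - (c + c^3/12)) := by
      rw [← mul_neg]
      apply mul_le_mul_of_nonneg_left _ hN0.le
      rw [hsmdef] at hle2
      linarith
    constructor <;> linarith [hb1, hb2, hNε, hrpowneg]
end
end

section
/- For every M > 0 there exist an integer n ≥ 2 and a point z ∈ γ₀ with z ≠ z*_{n,k} for all k = 0, …, n such that Σ_{k=0}^n |ω_n(z)| / (|ω_n′(z*_{n,k})| · |z − z*_{n,k}|) ≥ M·(log n)². In particular, limsup_{n→∞} L_{z*_n}/(log n)² = ∞, where L_{z*_n} is the Lebesgue constant of the Fejér points. -/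
noncomputable section

open Real

/-- The Lebesgue function of the Fejér points `z*_{n,k}` on `γ₀` at `z`. -/
def LebSum (n : ℕ) (z : ℂ) : ℝ :=
  ∑ k ∈ Finset.range (n + 1),
    ‖omegaF n z‖ /
      (‖deriv (omegaF n) (zstar n k)‖ * ‖z - zstar n k‖)
namespace S16

def phi (x : ℝ) : ℝ := Real.sin x ^ 3 * Real.cos x

lemma sqrt3_sq : Real.sqrt 3 ^ 2 = 3 := Real.sq_sqrt (by norm_num)

lemma sqrt3_lb : 1.732 ≤ Real.sqrt 3 := by
  nlinarith [sqrt3_sq, Real.sqrt_nonneg 3]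

lemma sqrt3_ub : Real.sqrt 3 ≤ 1.7321 := by
  nlinarith [sqrt3_sq, Real.sqrt_nonneg 3]

lemma sqrt2_sq : Real.sqrt 2 ^ 2 = 2 := Real.sq_sqrt (by norm_num)

lemma sqrt2_lb : 1.414 ≤ Real.sqrt 2 := by
  nlinarith [sqrt2_sq, Real.sqrt_nonneg 2]

lemma sqrt2_ub : Real.sqrt 2 ≤ 1.4143 := by
  nlinarith [sqrt2_sq, Real.sqrt_nonneg 2]

lemma phi_reflect (v : ℝ) : phi (π/3 - v) - phi (π/3 + v) = phi v := by
  have h3 := sqrt3_sq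
  simp only [phi, Real.sin_sub, Real.sin_add, Real.cos_sub, Real.cos_add,
    Real.sin_pi_div_three, Real.cos_pi_div_three]
  linear_combination ((Real.sqrt 3 ^ 2 * Real.sin v * Real.cos v ^ 3) / 8
    + 3 * Real.sin v ^ 3 * Real.cos v / 8) * h3

lemma q_formula (v : ℝ) : phi (π/3) - phi (π/3 - v)
    = Real.sin v ^ 2 * (Real.sqrt 3 * (2 + Real.cos v ^ 2 - Real.sin v ^ 2)
        - 2 * Real.sin v * Real.cos v) / 4 := by
  have h3 := sqrt3_sq
  have hp : Real.sin v ^ 2 + Real.cos v ^ 2 = 1 := Real.sin_sq_add_cos_sq v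
  simp only [phi, Real.sin_sub, Real.cos_sub, Real.sin_pi_div_three, Real.cos_pi_div_three]
  linear_combination
    ((-(Real.sqrt 3 ^ 2 * Real.sin v * Real.cos v ^ 3) + 3 * Real.sqrt 3 * Real.sin v ^ 2 * Real.cos v ^ 2
      - Real.sqrt 3 * Real.cos v ^ 4 + Real.sqrt 3 - 3 * Real.sin v ^ 3 * Real.cos v) / 16) * h3
    + (Real.sqrt 3 * (5 * Real.sin v ^ 2 - 3 * Real.cos v ^ 2 - 3) / 16) * hp

lemma phi_pi_div_three : phi (π/3) = 3 * Real.sqrt 3 / 16 := by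
  have h3 := sqrt3_sq
  simp only [phi, Real.sin_pi_div_three, Real.cos_pi_div_three]
  linear_combination (Real.sqrt 3 / 16) * h3

lemma phistar_lb : 0.324 ≤ phi (π/3) := by rw [phi_pi_div_three]; nlinarith [sqrt3_lb]
lemma phistar_ub : phi (π/3) ≤ 0.325 := by rw [phi_pi_div_three]; nlinarith [sqrt3_ub, sqrt3_lb]

lemma phi_hasDerivAt (x : ℝ) :
    HasDerivAt phi (Real.sin x ^ 2 * (3 * Real.cos x ^ 2 - Real.sin x ^ 2)) x := by
  have h := ((Real.hasDerivAt_sin x).pow 3).mul (Real.hasDerivAt_cos x)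
  refine h.congr_deriv ?_
  simp only [Pi.pow_apply]
  ring

lemma phi_continuous : Continuous phi := by
  unfold phi; fun_prop

lemma phi_strictMonoOn : StrictMonoOn phi (Set.Icc 0 (π/3)) := by
  apply strictMonoOn_of_deriv_pos (convex_Icc _ _) phi_continuous.continuousOn
  intro x hx
  rw [interior_Icc] at hx
  rw [(phi_hasDerivAt x).deriv]
  have hs : 0 < Real.sin x := Real.sin_pos_of_pos_of_lt_pi hx.1
    (lt_trans hx.2 (by nlinarith [Real.pi_pos]))
  have hc : Real.cos (π/3) < Real.cos x := by
    apply Real.cos_lt_cos_of_nonneg_of_le_pi hx.1.le (by nlinarith [Real.pi_pos]) hx.2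
  rw [Real.cos_pi_div_three] at hc
  have hp : Real.sin x ^ 2 + Real.cos x ^ 2 = 1 := Real.sin_sq_add_cos_sq x
  have hcc : 1/4 < Real.cos x ^ 2 := by nlinarith
  exact mul_pos (pow_pos hs 2) (by nlinarith)

lemma phi_nonneg {x : ℝ} (h0 : 0 ≤ x) (h1 : x ≤ π/2) : 0 ≤ phi x := by
  have hs : 0 ≤ Real.sin x := Real.sin_nonneg_of_nonneg_of_le_pi h0 (by nlinarith [Real.pi_pos])
  have hc : 0 ≤ Real.cos x := Real.cos_nonneg_of_mem_Icc ⟨by linarith [Real.pi_pos], h1⟩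
  unfold phi
  positivity

lemma phi_pos {x : ℝ} (h0 : 0 < x) (h1 : x < π/2) : 0 < phi x := by
  have hs : 0 < Real.sin x := Real.sin_pos_of_pos_of_lt_pi h0 (by nlinarith [Real.pi_pos])
  have hc : 0 < Real.cos x := Real.cos_pos_of_mem_Ioo ⟨by linarith [Real.pi_pos], h1⟩
  unfold phi
  positivity

lemma sq_small {v : ℝ} (h0 : 0 < v) (h1 : v ≤ 1/1000) : v^2 ≤ v/1000 := by nlinarith

lemma sin_lb {v : ℝ} (h0 : 0 < v) (h1 : v ≤ 1/1000) : 0.99 * v ≤ Real.sin v := by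
  have h2 := sq_small h0 h1
  have h3 : v^3 ≤ v/1000000 := by nlinarith
  nlinarith [Real.sin_gt_sub_cube h0]

lemma q_lb {v : ℝ} (h0 : 0 < v) (h1 : v ≤ 1/1000) :
    v^2 ≤ phi (π/3) - phi (π/3 - v) := by
  rw [q_formula]
  have hs1 := sin_lb h0 h1
  have hs2 := (Real.sin_lt h0).le
  have hc1 : 1 - v^2/2 ≤ Real.cos v := Real.one_sub_sq_div_two_le_cos
  have hc2 := Real.cos_le_one v
  have h3 := sqrt3_lb
  have h3' := sqrt3_ub
  have hsnn : 0 ≤ Real.sin v := by nlinarith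
  have hv2 := sq_small h0 h1
  have hS2 : 0.98 * v^2 ≤ Real.sin v ^ 2 := by nlinarith
  have hC2 : 1 - v^2 ≤ Real.cos v ^ 2 := by nlinarith [sq_nonneg v]
  have hbr : 4.3 ≤ Real.sqrt 3 * (2 + Real.cos v ^ 2 - Real.sin v ^ 2)
      - 2 * Real.sin v * Real.cos v := by
    have hsc : Real.sin v * Real.cos v ≤ v := by nlinarith
    nlinarith
  nlinarith [mul_le_mul hS2 hbr (by norm_num) (sq_nonneg (Real.sin v))]

lemma q_ub {v : ℝ} (h0 : 0 < v) (h1 : v ≤ 1/1000) :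
    phi (π/3) - phi (π/3 - v) ≤ 1.3 * v^2 := by
  rw [q_formula]
  have hs1 := sin_lb h0 h1
  have hs2 := (Real.sin_lt h0).le
  have hc1 : 1 - v^2/2 ≤ Real.cos v := Real.one_sub_sq_div_two_le_cos
  have hc2 := Real.cos_le_one v
  have h3 := sqrt3_lb
  have h3' := sqrt3_ub
  have hsnn : 0 ≤ Real.sin v := by nlinarith
  have hcnn : 0 ≤ Real.cos v := by nlinarith
  have hS2 : Real.sin v ^ 2 ≤ v^2 := by nlinarith
  have hbr : Real.sqrt 3 * (2 + Real.cos v ^ 2 - Real.sin v ^ 2)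
      - 2 * Real.sin v * Real.cos v ≤ 5.2 := by nlinarith [sq_nonneg (Real.sin v), mul_nonneg hsnn hcnn]
  have hbrnn : 0 ≤ Real.sqrt 3 * (2 + Real.cos v ^ 2 - Real.sin v ^ 2)
      - 2 * Real.sin v * Real.cos v := by nlinarith [sq_nonneg (Real.sin v), sq_nonneg (Real.cos v)]
  nlinarith [mul_le_mul hS2 hbr hbrnn (sq_nonneg v)]

lemma phiv_lb {v : ℝ} (h0 : 0 < v) (h1 : v ≤ 1/1000) : 0.9 * v^3 ≤ phi v := by
  have hs1 := sin_lb h0 h1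
  have hc1 : 1 - v^2/2 ≤ Real.cos v := Real.one_sub_sq_div_two_le_cos
  have hv2 := sq_small h0 h1
  have hS3 : 0.97 * v^3 ≤ Real.sin v ^ 3 := by
    have := pow_le_pow_left₀ (by positivity : (0:ℝ) ≤ 0.99*v) hs1 3
    nlinarith [pow_pos h0 3]
  have hc0 : 0.99 ≤ Real.cos v := by nlinarith
  unfold phi
  nlinarith [pow_pos h0 3]

lemma phiv_ub {v : ℝ} (h0 : 0 < v) (h1 : v ≤ 1/1000) : phi v ≤ v^3 := by
  have hs2 := (Real.sin_lt h0).le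
  have hc2 := Real.cos_le_one v
  have hsnn : 0 ≤ Real.sin v := by nlinarith [sin_lb h0 h1]
  have hS3 : Real.sin v ^ 3 ≤ v^3 := pow_le_pow_left₀ hsnn hs2 3
  unfold phi
  nlinarith [pow_pos h0 3, pow_nonneg hsnn 3]

lemma I_sq' : Complex.I ^ 2 = -1 := Complex.I_sq

lemma cpow_half_I_pos {t : ℝ} (ht : 0 < t) :
    ((t : ℂ) * Complex.I) ^ ((1:ℂ)/2)
      = ((Real.sqrt t : ℝ) : ℂ) * (((Real.sqrt 2/2 : ℝ) : ℂ) + ((Real.sqrt 2/2 : ℝ) : ℂ) * Complex.I) := by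
  have hne : (t : ℂ) * Complex.I ≠ 0 :=
    mul_ne_zero (Complex.ofReal_ne_zero.2 ht.ne') Complex.I_ne_zero
  rw [Complex.cpow_def_of_ne_zero hne]
  have habs : ‖(t : ℂ) * Complex.I‖ = t := by
    rw [norm_mul, Complex.norm_I, Complex.norm_real, Real.norm_eq_abs, abs_of_pos ht, mul_one]
  have harg : ((t : ℂ) * Complex.I).arg = π/2 := by
    rw [Complex.arg_real_mul _ ht, Complex.arg_I]
  have hlog : Complex.log ((t : ℂ) * Complex.I) * ((1:ℂ)/2)
      = ((Real.log t / 2 : ℝ) : ℂ) + ((π/4 : ℝ) : ℂ) * Complex.I := by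
    rw [Complex.log, habs, harg]; push_cast; ring
  rw [hlog, Complex.exp_add]
  have h2 : Complex.exp (((π/4 : ℝ) : ℂ) * Complex.I)
      = ((Real.sqrt 2/2 : ℝ) : ℂ) + ((Real.sqrt 2/2 : ℝ) : ℂ) * Complex.I := by
    rw [Complex.exp_mul_I, ← Complex.ofReal_cos, ← Complex.ofReal_sin,
      Real.cos_pi_div_four, Real.sin_pi_div_four]
  have h1 : Complex.exp ((Real.log t / 2 : ℝ) : ℂ) = ((Real.sqrt t : ℝ) : ℂ) := by
    rw [← Complex.ofReal_exp, ← Real.log_sqrt ht.le, Real.exp_log (Real.sqrt_pos.2 ht)]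
  rw [h1, h2]

lemma cpow_half_I_neg {t : ℝ} (ht : t < 0) :
    ((t : ℂ) * Complex.I) ^ ((1:ℂ)/2)
      = ((Real.sqrt (-t) : ℝ) : ℂ) * (((Real.sqrt 2/2 : ℝ) : ℂ) - ((Real.sqrt 2/2 : ℝ) : ℂ) * Complex.I) := by
  have hmt : 0 < -t := by linarith
  have hrw : (t : ℂ) * Complex.I = ((-t : ℝ) : ℂ) * (-Complex.I) := by push_cast; ring
  have hne : (t : ℂ) * Complex.I ≠ 0 :=
    mul_ne_zero (Complex.ofReal_ne_zero.2 ht.ne) Complex.I_ne_zero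
  rw [Complex.cpow_def_of_ne_zero hne]
  have habs : ‖(t : ℂ) * Complex.I‖ = -t := by
    rw [norm_mul, Complex.norm_I, Complex.norm_real, Real.norm_eq_abs, abs_of_neg ht, mul_one]
  have harg : ((t : ℂ) * Complex.I).arg = -(π/2) := by
    rw [hrw, Complex.arg_real_mul _ hmt, Complex.arg_neg_I]
  have hlog : Complex.log ((t : ℂ) * Complex.I) * ((1:ℂ)/2)
      = ((Real.log (-t) / 2 : ℝ) : ℂ) + ((-(π/4) : ℝ) : ℂ) * Complex.I := by
    rw [Complex.log, habs, harg]; push_cast; ring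
  rw [hlog, Complex.exp_add]
  have h2 : Complex.exp (((-(π/4) : ℝ) : ℂ) * Complex.I)
      = ((Real.sqrt 2/2 : ℝ) : ℂ) - ((Real.sqrt 2/2 : ℝ) : ℂ) * Complex.I := by
    rw [Complex.exp_mul_I, ← Complex.ofReal_cos, ← Complex.ofReal_sin,
      Real.cos_neg, Real.sin_neg, Real.cos_pi_div_four, Real.sin_pi_div_four]
    push_cast; ring
  have h1 : Complex.exp ((Real.log (-t) / 2 : ℝ) : ℂ) = ((Real.sqrt (-t) : ℝ) : ℂ) := by
    rw [← Complex.ofReal_exp, ← Real.log_sqrt hmt.le, Real.exp_log (Real.sqrt_pos.2 hmt)]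
  rw [h1, h2]

lemma sqrt_cube_helper {s c : ℝ} (hs : 0 < s) (hc : 0 < c) :
    Real.sqrt (s^3*c) = s * c * Real.sqrt (s/c) := by
  rw [show s^3*c = (s*c)^2*(s/c) by field_simp,
    Real.sqrt_mul (sq_nonneg _), Real.sqrt_sq (by positivity)]

lemma psi0_exp_pos {x : ℝ} (h0 : 0 < x) (h1 : x < π/2) :
    psi0 (Complex.exp (Complex.I * ((2*x : ℝ) : ℂ)))
      = (-1 + Complex.I) * ((2*Real.sqrt 2*Real.sqrt (phi x) : ℝ) : ℂ) := by
  have hpi := Real.pi_pos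
  set s := Real.sin x with hsdef
  set c := Real.cos x with hcdef
  have hs0 : 0 < s := Real.sin_pos_of_pos_of_lt_pi h0 (by linarith)
  have hc0 : 0 < c := Real.cos_pos_of_mem_Ioo ⟨by linarith, h1⟩
  have hsc : s^2 + c^2 = 1 := Real.sin_sq_add_cos_sq x
  have hscC : ((s : ℂ))^2 + ((c : ℂ))^2 = 1 := by
    have := congrArg (fun r : ℝ => (r : ℂ)) hsc
    push_cast at this; exact_mod_cast this
  have hI := Complex.I_sq
  set w := Complex.exp (Complex.I * ((2*x : ℝ) : ℂ)) with hwdef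
  have hcosC : Complex.cos ((x:ℝ):ℂ) = ((c:ℝ):ℂ) := (Complex.ofReal_cos x).symm
  have hsinC : Complex.sin ((x:ℝ):ℂ) = ((s:ℝ):ℂ) := (Complex.ofReal_sin x).symm
  have hw : w = ((2*c^2 - 1 : ℝ) : ℂ) + ((2*s*c : ℝ) : ℂ) * Complex.I := by
    rw [hwdef, show ((2*x:ℝ):ℂ) = 2*((x:ℝ):ℂ) by push_cast; ring, mul_comm,
      Complex.exp_mul_I, Complex.cos_two_mul, Complex.sin_two_mul, hcosC, hsinC]
    push_cast; ring
  have hw0 : w ≠ 0 := Complex.exp_ne_zero _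
  have hprod : (((2*c^2 - 1 : ℝ) : ℂ) - ((2*s*c : ℝ) : ℂ) * Complex.I) * w = 1 := by
    rw [hw]; push_cast
    linear_combination (4*(c:ℂ)^2) * hscC - (2*(s:ℂ)*(c:ℂ))^2 * hI
  have h1w : 1/w = ((2*c^2 - 1 : ℝ) : ℂ) - ((2*s*c : ℝ) : ℂ) * Complex.I :=
    (eq_one_div_of_mul_eq_one_left hprod).symm
  have hfirst : w - 1/w = ((4*s*c : ℝ) : ℂ) * Complex.I := by
    rw [h1w, hw]; push_cast; ring
  have hre2 : (w + 1).re = 2*c^2 := by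
    rw [hw]; simp [Complex.add_re, Complex.mul_re, ← Complex.ofReal_pow]
  have hw1 : w + 1 ≠ 0 := by
    intro hcon; rw [hcon, Complex.zero_re] at hre2; nlinarith
  have hcC : (c : ℂ) ≠ 0 := Complex.ofReal_ne_zero.2 hc0.ne'
  have hquot : (w - 1)/(w + 1) = ((s/c : ℝ) : ℂ) * Complex.I := by
    rw [div_eq_iff hw1, hw]; push_cast
    field_simp
    linear_combination (2*(c:ℂ)) * hscC - (2*(c:ℂ)*(s:ℂ)^2) * hI
  have ht0 : 0 < s/c := div_pos hs0 hc0
  have hphi : phi x = s^3*c := rfl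
  have hK : 4*s*c*Real.sqrt (s/c)*(Real.sqrt 2/2) = 2*Real.sqrt 2*Real.sqrt (phi x) := by
    rw [hphi, sqrt_cube_helper hs0 hc0]; ring
  rw [psi0, hfirst, hquot, cpow_half_I_pos ht0]
  rw [show ((4*s*c : ℝ) : ℂ) * Complex.I * (((Real.sqrt (s/c) : ℝ) : ℂ) *
      (((Real.sqrt 2/2 : ℝ) : ℂ) + ((Real.sqrt 2/2 : ℝ) : ℂ) * Complex.I))
      = ((4*s*c*Real.sqrt (s/c)*(Real.sqrt 2/2) : ℝ) : ℂ) * (Complex.I * (1 + Complex.I)) by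
    push_cast; ring, hK]
  linear_combination ((2*Real.sqrt 2*Real.sqrt (phi x) : ℝ) : ℂ) * hI

lemma psi0_exp_neg {x : ℝ} (h0 : 0 < x) (h1 : x < π/2) :
    psi0 (Complex.exp (Complex.I * ((-(2*x) : ℝ) : ℂ)))
      = (-1 - Complex.I) * ((2*Real.sqrt 2*Real.sqrt (phi x) : ℝ) : ℂ) := by
  have hpi := Real.pi_pos
  set s := Real.sin x with hsdef
  set c := Real.cos x with hcdef
  have hs0 : 0 < s := Real.sin_pos_of_pos_of_lt_pi h0 (by linarith)
  have hc0 : 0 < c := Real.cos_pos_of_mem_Ioo ⟨by linarith, h1⟩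
  have hsc : s^2 + c^2 = 1 := Real.sin_sq_add_cos_sq x
  have hscC : ((s : ℂ))^2 + ((c : ℂ))^2 = 1 := by
    have := congrArg (fun r : ℝ => (r : ℂ)) hsc
    push_cast at this; exact_mod_cast this
  have hI := Complex.I_sq
  set w := Complex.exp (Complex.I * ((-(2*x) : ℝ) : ℂ)) with hwdef
  have hcosC : Complex.cos ((x:ℝ):ℂ) = ((c:ℝ):ℂ) := (Complex.ofReal_cos x).symm
  have hsinC : Complex.sin ((x:ℝ):ℂ) = ((s:ℝ):ℂ) := (Complex.ofReal_sin x).symm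
  have hw : w = ((2*c^2 - 1 : ℝ) : ℂ) - ((2*s*c : ℝ) : ℂ) * Complex.I := by
    rw [hwdef, show ((-(2*x):ℝ):ℂ) = -(2*((x:ℝ):ℂ)) by push_cast; ring, mul_comm,
      Complex.exp_mul_I, Complex.cos_neg, Complex.sin_neg,
      Complex.cos_two_mul, Complex.sin_two_mul, hcosC, hsinC]
    push_cast; ring
  have hw0 : w ≠ 0 := Complex.exp_ne_zero _
  have hprod : (((2*c^2 - 1 : ℝ) : ℂ) + ((2*s*c : ℝ) : ℂ) * Complex.I) * w = 1 := by
    rw [hw]; push_cast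
    linear_combination (4*(c:ℂ)^2) * hscC - (2*(s:ℂ)*(c:ℂ))^2 * hI
  have h1w : 1/w = ((2*c^2 - 1 : ℝ) : ℂ) + ((2*s*c : ℝ) : ℂ) * Complex.I :=
    (eq_one_div_of_mul_eq_one_left hprod).symm
  have hfirst : w - 1/w = ((-(4*s*c) : ℝ) : ℂ) * Complex.I := by
    rw [h1w, hw]; push_cast; ring
  have hre2 : (w + 1).re = 2*c^2 := by
    rw [hw]; simp [Complex.add_re, Complex.sub_re, Complex.mul_re, ← Complex.ofReal_pow]
  have hw1 : w + 1 ≠ 0 := by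
    intro hcon; rw [hcon, Complex.zero_re] at hre2; nlinarith
  have hcC : (c : ℂ) ≠ 0 := Complex.ofReal_ne_zero.2 hc0.ne'
  have hquot : (w - 1)/(w + 1) = ((-(s/c) : ℝ) : ℂ) * Complex.I := by
    rw [div_eq_iff hw1, hw]; push_cast
    field_simp
    linear_combination (2*(c:ℂ)) * hscC - (2*(c:ℂ)*(s:ℂ)^2) * hI
  have ht0 : -(s/c) < 0 := neg_neg_iff_pos.2 (div_pos hs0 hc0)
  have hphi : phi x = s^3*c := rfl
  have hK : 4*s*c*Real.sqrt (s/c)*(Real.sqrt 2/2) = 2*Real.sqrt 2*Real.sqrt (phi x) := by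
    rw [hphi, sqrt_cube_helper hs0 hc0]; ring
  rw [psi0, hfirst, hquot, cpow_half_I_neg ht0, neg_neg]
  rw [show ((-(4*s*c) : ℝ) : ℂ) * Complex.I * (((Real.sqrt (s/c) : ℝ) : ℂ) *
      (((Real.sqrt 2/2 : ℝ) : ℂ) - ((Real.sqrt 2/2 : ℝ) : ℂ) * Complex.I))
      = ((4*s*c*Real.sqrt (s/c)*(Real.sqrt 2/2) : ℝ) : ℂ) * (-(Complex.I * (1 - Complex.I))) by
    push_cast; ring, hK]
  linear_combination ((2*Real.sqrt 2*Real.sqrt (phi x) : ℝ) : ℂ) * hI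

lemma psi0_one : psi0 1 = 0 := by
  simp [psi0]
def ynode (T k : ℕ) : ℝ := 2*Real.sqrt 2*Real.sqrt (phi (π*k/(6*(T:ℝ)+3)))

lemma theta_pos_eq (T k : ℕ) (hk : k ≤ 3*T+1) :
    theta (6*T+2) k = 2*(π*k/(6*(T:ℝ)+3)) := by
  unfold theta thetaAux
  rw [if_pos (by omega : k ≤ (6*T+2)/2), if_pos (by omega : (6*T+2) % 2 = 0)]
  push_cast; ring

lemma theta_neg_eq (T k : ℕ) (h1 : 3*T+1 < k) (h2 : k ≤ 6*T+2) :
    theta (6*T+2) k = -(2*(π*((6*T+3-k : ℕ) : ℝ)/(6*(T:ℝ)+3))) := by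
  unfold theta thetaAux
  rw [if_neg (by omega : ¬ (k ≤ (6*T+2)/2))]
  rw [show 2*((6*T+2)/2)+1-k = 6*T+3-k by omega]
  rw [if_pos (by omega : (6*T+2) % 2 = 0)]
  push_cast [Nat.cast_sub (by omega : k ≤ 6*T+3)]; ring

lemma xk_pos {T k : ℕ} (hk1 : 1 ≤ k) : 0 < π*k/(6*(T:ℝ)+3) := by
  have : (0:ℝ) < k := by exact_mod_cast hk1
  have := Real.pi_pos
  positivity

lemma xk_lt {T k : ℕ} (hk : k ≤ 3*T+1) : π*k/(6*(T:ℝ)+3) < π/2 := by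
  have hpi := Real.pi_pos
  have hden : (0:ℝ) < 6*(T:ℝ)+3 := by positivity
  rw [div_lt_div_iff₀ hden (by norm_num : (0:ℝ) < 2)]
  have hkR : (k:ℝ) ≤ 3*(T:ℝ)+1 := by exact_mod_cast hk
  nlinarith

lemma zstar_pos_eq (T k : ℕ) (hk : k ≤ 3*T+1) :
    zstar (6*T+2) k = (-1 + Complex.I) * ((ynode T k : ℝ) : ℂ) := by
  rcases Nat.eq_zero_or_pos k with hk0 | hk1
  · subst hk0
    have hphi0 : phi (π*(0:ℕ)/(6*(T:ℝ)+3)) = 0 := by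
      norm_num [phi]
    have hy0 : ynode T 0 = 0 := by rw [ynode, hphi0, Real.sqrt_zero, mul_zero]
    rw [hy0, zstar, theta_pos_eq T 0 (by omega)]
    norm_num [psi0_one]
  · rw [zstar, theta_pos_eq T k hk]
    exact psi0_exp_pos (xk_pos hk1) (xk_lt hk)

lemma zstar_neg_eq (T k : ℕ) (h1 : 3*T+1 < k) (h2 : k ≤ 6*T+2) :
    zstar (6*T+2) k = (-1 - Complex.I) * ((ynode T (6*T+3-k) : ℝ) : ℂ) := by
  rw [zstar, theta_neg_eq T k h1 h2]
  exact psi0_exp_neg (xk_pos (by omega : 1 ≤ 6*T+3-k)) (xk_lt (by omega : 6*T+3-k ≤ 3*T+1))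

lemma abs_ray_pos : ‖-1 + Complex.I‖ = Real.sqrt 2 := by
  rw [Complex.norm_def, Complex.normSq_apply]
  norm_num

lemma ray_dist (u v : ℝ) :
    ‖(-1 + Complex.I) * (u : ℂ) - (-1 + Complex.I) * (v : ℂ)‖
      = Real.sqrt 2 * |u - v| := by
  rw [← mul_sub, norm_mul, abs_ray_pos, ← Complex.ofReal_sub, Complex.norm_real, Real.norm_eq_abs]

lemma cross_dist (u v : ℝ) :
    ‖(-1 + Complex.I) * (u : ℂ) - (-1 - Complex.I) * (v : ℂ)‖
      = Real.sqrt (2*u^2 + 2*v^2) := by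
  rw [Complex.norm_def]
  congr 1
  simp [Complex.normSq_apply, Complex.add_re, Complex.add_im, Complex.mul_re, Complex.mul_im]
  ring
lemma sqrt_bounds {p : ℝ} (h1 : 0.3136 ≤ p) (h2 : p ≤ 0.3364) :
    0.56 ≤ Real.sqrt p ∧ Real.sqrt p ≤ 0.58 := by
  have h0 : (0:ℝ) ≤ p := by linarith
  have hs := Real.sq_sqrt h0
  have hn := Real.sqrt_nonneg p
  constructor <;> nlinarith

lemma const_eq : (27 : ℝ) ^ ((1 : ℝ) / 4) / Real.sqrt 2 = Real.sqrt (3*Real.sqrt 3/2) := by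
  have h27 : Real.sqrt 27 = 3*Real.sqrt 3 := by
    rw [show (27:ℝ) = 3^2*3 by norm_num, Real.sqrt_mul (by positivity), Real.sqrt_sq (by norm_num)]
  have h14 : (27 : ℝ) ^ ((1 : ℝ) / 4) = Real.sqrt (Real.sqrt 27) := by
    rw [show ((1:ℝ)/4) = (1/2)*(1/2) by norm_num, Real.rpow_mul (by norm_num : (0:ℝ) ≤ 27),
      ← Real.sqrt_eq_rpow, ← Real.sqrt_eq_rpow]
  rw [h14, h27, Real.sqrt_div (by positivity : (0:ℝ) ≤ 3*Real.sqrt 3)]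

lemma ne_of_abs_sub_pos {u v : ℂ} (h : 0 < ‖u - v‖) : u ≠ v := by
  intro he; rw [he, sub_self] at h; simp at h

set_option maxHeartbeats 1600000 in
lemma main_estimate (T : ℕ) (hT : 600000 ≤ T) :
    ∃ z ∈ gamma0, (∀ k : ℕ, k ≤ 6*T+2 → z ≠ zstar (6*T+2) k) ∧
      (6*(T:ℝ)+3)/90 ≤ LebSum (6*T+2) z := by
  have hpi := Real.pi_pos
  have hpi4 : π ≤ 3.1416 := by linarith only [Real.pi_lt_d6]
  have hpi3 : 3.14 ≤ π := by linarith only [Real.pi_gt_d6]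
  have hTR : (600000:ℝ) ≤ (T:ℝ) := by exact_mod_cast hT
  have hmR : (1000000 : ℝ) ≤ 6*(T:ℝ)+3 := by linarith only [hTR]
  have hmR0 : (0:ℝ) < 6*(T:ℝ)+3 := by linarith only [hmR]
  set H : ℝ := π/(6*(T:ℝ)+3) with hHdef
  have hH0 : 0 < H := by positivity
  have hH1 : H ≤ 1/100000 := by
    rw [hHdef, div_le_iff₀ hmR0]; nlinarith only [hpi4, hTR]
  have hH1' : H ≤ 1/1000 := by linarith only [hH1]
  have hmH : (6*(T:ℝ)+3) * H = π := by rw [hHdef]; field_simp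
  have hH2pos : 0 < H^2 := pow_pos hH0 2
  have hH3pos : 0 < H^3 := pow_pos hH0 3
  have hq1 : H^2 ≤ phi (π/3) - phi (π/3 - H) := q_lb hH0 hH1'
  have hq2 : phi (π/3) - phi (π/3 - H) ≤ 1.3*H^2 := q_ub hH0 hH1'
  have hrefl : phi (π/3 - H) - phi (π/3 + H) = phi H := phi_reflect H
  have hf1 : 0.9*H^3 ≤ phi H := phiv_lb hH0 hH1'
  have hf2 : phi H ≤ H^3 := phiv_ub hH0 hH1'
  have hps1 := phistar_lb
  have hps2 := phistar_ub
  have hH2small : H^2 ≤ 1/1000000 := by nlinarith only [hH1, hH0]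
  have hH3small : H^3 ≤ H^2 := by nlinarith only [hH1', hH0, sq_nonneg H]
  have hpa1 : 0.3239 ≤ phi (π/3 - H) := by linarith only [hq2, hps1, hH2small]
  have hpa2 : phi (π/3 - H) ≤ 0.325 := by linarith only [hq1, hps2, sq_nonneg H]
  have hpb1 : 0.3238 ≤ phi (π/3 + H) := by
    linarith only [hrefl, hf2, hpa1, hH3small, hH2small]
  have hpb2 : phi (π/3 + H) ≤ 0.325 := by linarith only [hrefl, hf1, hpa2, hH3pos]
  obtain ⟨hsa1, hsa2⟩ := sqrt_bounds (p := phi (π/3 - H)) (by linarith only [hpa1]) (by linarith only [hpa2])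
  obtain ⟨hsb1, hsb2⟩ := sqrt_bounds (p := phi (π/3 + H)) (by linarith only [hpb1]) (by linarith only [hpb2])
  obtain ⟨hse1, hse2⟩ := sqrt_bounds (p := phi (π/3)) (by linarith only [hps1]) (by linarith only [hps2])
  have hs2l := sqrt2_lb
  have hs2u := sqrt2_ub
  have hxa : π*((2*T : ℕ):ℝ)/(6*(T:ℝ)+3) = π/3 - H := by
    rw [hHdef]; push_cast; field_simp; ring
  have hxe : π*((2*T+1 : ℕ):ℝ)/(6*(T:ℝ)+3) = π/3 := by
    push_cast; field_simp; ring
  have hxb : π*((2*T+2 : ℕ):ℝ)/(6*(T:ℝ)+3) = π/3 + H := by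
    rw [hHdef]; push_cast; field_simp; ring
  have hya : ynode T (2*T) = 2*Real.sqrt 2*Real.sqrt (phi (π/3 - H)) := by rw [ynode, hxa]
  have hye : ynode T (2*T+1) = 2*Real.sqrt 2*Real.sqrt (phi (π/3)) := by rw [ynode, hxe]
  have hyb : ynode T (2*T+2) = 2*Real.sqrt 2*Real.sqrt (phi (π/3 + H)) := by rw [ynode, hxb]
  set ya : ℝ := ynode T (2*T) with hyadef
  set ye : ℝ := ynode T (2*T+1) with hyedef
  set yb : ℝ := ynode T (2*T+2) with hybdef
  have hsqa := Real.sq_sqrt (by linarith only [hpa1] : (0:ℝ) ≤ phi (π/3 - H))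
  have hsqb := Real.sq_sqrt (by linarith only [hpb1] : (0:ℝ) ≤ phi (π/3 + H))
  have hsqe := Real.sq_sqrt (by linarith only [hps1] : (0:ℝ) ≤ phi (π/3))
  have hDSab : (Real.sqrt (phi (π/3 - H)) - Real.sqrt (phi (π/3 + H)))
      * (Real.sqrt (phi (π/3 - H)) + Real.sqrt (phi (π/3 + H))) = phi H := by
    linear_combination hsqa - hsqb + hrefl
  have hDSea : (Real.sqrt (phi (π/3)) - Real.sqrt (phi (π/3 - H)))
      * (Real.sqrt (phi (π/3)) + Real.sqrt (phi (π/3 - H))) = phi (π/3) - phi (π/3 - H) := by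
    linear_combination hsqe - hsqa
  have hDab1 : (0.9/1.16)*H^3 ≤ Real.sqrt (phi (π/3 - H)) - Real.sqrt (phi (π/3 + H)) := by
    nlinarith only [hDSab, hf1, hsa1, hsa2, hsb1, hsb2, hH3pos]
  have hDab2 : Real.sqrt (phi (π/3 - H)) - Real.sqrt (phi (π/3 + H)) ≤ (1/1.12)*H^3 := by
    nlinarith only [hDSab, hf2, hsa1, hsa2, hsb1, hsb2, hH3pos]
  have hDea1 : (1/1.16)*H^2 ≤ Real.sqrt (phi (π/3)) - Real.sqrt (phi (π/3 - H)) := by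
    nlinarith only [hDSea, hq1, hsa1, hsa2, hse1, hse2, hH2pos]
  have hDea2 : Real.sqrt (phi (π/3)) - Real.sqrt (phi (π/3 - H)) ≤ (1.3/1.12)*H^2 := by
    nlinarith only [hDSea, hq2, hsa1, hsa2, hse1, hse2, hH2pos]
  have hgap_ab1 : 2*H^3 ≤ ya - yb := by
    rw [hya, hyb]; nlinarith only [hDab1, hs2l, hs2u, hH3pos]
  have hgap_ab2 : ya - yb ≤ 2.6*H^3 := by
    rw [hya, hyb]; nlinarith only [hDab2, hDab1, hs2l, hs2u, hH3pos]
  have hgap_ea1 : 2.4*H^2 ≤ ye - ya := by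
    rw [hya, hye]; nlinarith only [hDea1, hs2l, hs2u, hH2pos]
  have hgap_ea2 : ye - ya ≤ 3.3*H^2 := by
    rw [hya, hye]; nlinarith only [hDea2, hDea1, hs2l, hs2u, hH2pos]
  have hya_pos : 0 < ya := by rw [hya]; nlinarith only [hs2l, hsa1]
  set d : ℝ := H^2/5 with hddef
  have hd0 : 0 < d := by rw [hddef]; positivity
  set yz : ℝ := ya + d with hyzdef
  have hyz_pos : 0 < yz := by rw [hyzdef]; linarith only [hya_pos, hd0]
  set z : ℂ := (-1 + Complex.I) * (yz : ℂ) with hzdef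
  have hyz_lt_ye : yz < ye := by
    rw [hyzdef, hddef]; linarith only [hgap_ea1, hH2pos]
  -- other same-ray nodes sit strictly below ya
  have hphi_lt : ∀ k : ℕ, k ≤ 3*T+1 → k ≠ 2*T → k ≠ 2*T+1 → k ≠ 2*T+2 →
      phi (π*(k:ℝ)/(6*(T:ℝ)+3)) < phi (π/3 - H) := by
    intro k hk h1 h2 h3
    have hmem_a : π/3 - H ∈ Set.Icc 0 (π/3) := by
      constructor
      · linarith only [hH1', hpi3]
      · linarith only [hH0]
    rcases (by omega : k < 2*T ∨ 2*T+3 ≤ k) with hlt | hge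
    · have hkR : (k:ℝ) < 2*(T:ℝ) := by exact_mod_cast hlt
      have hmem_k : π*(k:ℝ)/(6*(T:ℝ)+3) ∈ Set.Icc 0 (π/3) := by
        constructor
        · positivity
        · rw [div_le_iff₀ hmR0]; nlinarith only [hkR, hpi]
      have hklt : π*(k:ℝ)/(6*(T:ℝ)+3) < π/3 - H := by
        rw [← hxa, div_lt_div_iff₀ hmR0 hmR0]
        push_cast
        have hh := mul_lt_mul_of_pos_right (mul_lt_mul_of_pos_left hkR hpi) hmR0
        nlinarith only [hh]
      exact phi_strictMonoOn hmem_k hmem_a hklt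
    · have hj2 : 2 ≤ k - (2*T+1) := by omega
      have hjT : k - (2*T+1) ≤ T := by omega
      set j : ℕ := k - (2*T+1) with hjdef
      have hjR : (2:ℝ) ≤ (j:ℝ) := by exact_mod_cast hj2
      have hjTR : (j:ℝ) ≤ (T:ℝ) := by exact_mod_cast hjT
      have hkj : (k:ℝ) = 2*(T:ℝ)+1+(j:ℝ) := by
        have hk' : k = 2*T+1+j := by omega
        rw [hk']; push_cast; ring
      have hxk : π*(k:ℝ)/(6*(T:ℝ)+3) = π/3 + (j:ℝ)*H := by
        rw [hkj, hHdef]; field_simp; ring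
      have hTH := mul_le_mul_of_nonneg_right hjTR hH0.le
      have hjH_ub : (j:ℝ)*H ≤ π/6 := by linarith only [hTH, hmH, hH0]
      have hjH_lb : 2*H ≤ (j:ℝ)*H := by nlinarith only [hjR, hH0]
      have hrefj := phi_reflect ((j:ℝ)*H)
      have hpj : 0 < phi ((j:ℝ)*H) :=
        phi_pos (by nlinarith only [hjR, hH0]) (by linarith only [hjH_ub, hpi])
      have hmono1 : phi (π/3 - (j:ℝ)*H) ≤ phi (π/3 - 2*H) := by
        apply phi_strictMonoOn.monotoneOn ?_ ?_ (by linarith only [hjH_lb])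
        · constructor
          · linarith only [hjH_ub, hpi]
          · nlinarith only [hjR, hH0]
        · constructor
          · linarith only [hH1', hpi3]
          · linarith only [hH0]
      have hmono2 : phi (π/3 - 2*H) < phi (π/3 - H) := by
        apply phi_strictMonoOn ?_ hmem_a (by linarith only [hH0])
        constructor
        · linarith only [hH1', hpi3]
        · linarith only [hH0]
      rw [hxk]
      linarith only [hrefj, hpj, hmono1, hmono2]
  have hy_lt : ∀ k : ℕ, k ≤ 3*T+1 → k ≠ 2*T → k ≠ 2*T+1 → k ≠ 2*T+2 → ynode T k < ya := by
    intro k hk h1 h2 h3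
    have hlt := hphi_lt k hk h1 h2 h3
    have h0 : 0 ≤ phi (π*(k:ℝ)/(6*(T:ℝ)+3)) :=
      phi_nonneg (by positivity) (xk_lt hk).le
    have hsq := Real.sqrt_lt_sqrt h0 hlt
    rw [hya, ynode]
    nlinarith only [hsq, hs2l, Real.sqrt_nonneg (phi (π*(k:ℝ)/(6*(T:ℝ)+3)))]
  have hynode_nonneg : ∀ k : ℕ, 0 ≤ ynode T k := by
    intro k; rw [ynode]; positivity
  -- gamma0 membership
  have hye_sq : ye^2 = 3*Real.sqrt 3/2 := by
    have h8 : ye^2 = 8*phi (π/3) := by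
      rw [hye]
      linear_combination (4*(Real.sqrt (phi (π/3)))^2) * sqrt2_sq + 8 * hsqe
    rw [h8, phi_pi_div_three]; ring
  have hye_nonneg : 0 ≤ ye := hyedef ▸ hynode_nonneg _
  have hye_eq : ye = Real.sqrt (3*Real.sqrt 3/2) := by
    rw [← hye_sq, Real.sqrt_sq hye_nonneg]
  have hyz_le : yz ≤ (27 : ℝ) ^ ((1 : ℝ) / 4) / Real.sqrt 2 := by
    rw [const_eq, ← hye_eq]; linarith only [hyz_lt_ye]
  have hzmem : z ∈ gamma0 := Or.inl ⟨yz, ⟨by linarith only [hyz_pos], hyz_le⟩, rfl⟩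
  -- per-node estimates
  set lw : ℕ → ℝ := fun k => if k = 2*T+2 then (6*(T:ℝ)+3)/45 else if k = 2*T+1 then 1/2 else 1
    with hlwdef
  have hlwb : lw (2*T+2) = (6*(T:ℝ)+3)/45 := by
    simp [hlwdef]
  have hlwe : lw (2*T+1) = 1/2 := by
    simp [hlwdef, show ¬(2*T+1 = 2*T+2) from by omega]
  have hlwo : ∀ k : ℕ, k ≠ 2*T+2 → k ≠ 2*T+1 → lw k = 1 := by
    intro k hk1 hk2
    simp only [hlwdef]; rw [if_neg hk1, if_neg hk2]
  have hza : zstar (6*T+2) (2*T) = (-1+Complex.I)*((ya : ℝ) : ℂ) :=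
    zstar_pos_eq T (2*T) (by omega)
  have hkey : ∀ k ∈ (Finset.range (6*T+2+1)).erase (2*T),
      0 < ‖zstar (6*T+2) (2*T) - zstar (6*T+2) k‖
      ∧ lw k * ‖zstar (6*T+2) (2*T) - zstar (6*T+2) k‖
          ≤ ‖z - zstar (6*T+2) k‖ := by
    intro k hkmem
    obtain ⟨hka, hkr⟩ := Finset.mem_erase.mp hkmem
    have hkn : k ≤ 6*T+2 := by
      have := Finset.mem_range.mp hkr; omega
    by_cases hk3 : k ≤ 3*T+1
    · have hzk : zstar (6*T+2) k = (-1+Complex.I)*((ynode T k : ℝ) : ℂ) := zstar_pos_eq T k hk3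
      rw [hza, hzk, hzdef, ray_dist, ray_dist]
      by_cases hkb : k = 2*T+2
      · subst hkb
        rw [hlwb, ← hybdef]
        have hpos1 : (0:ℝ) < ya - yb := by linarith only [hgap_ab1, hH3pos]
        have hpos2 : (0:ℝ) < yz - yb := by
          rw [hyzdef]; linarith only [hpos1, hd0]
        rw [abs_of_pos hpos1, abs_of_pos hpos2]
        constructor
        · nlinarith only [hpos1, hs2l]
        · have hstep : (6*(T:ℝ)+3)/45 * (ya - yb) ≤ d := by
            have h1 : (6*(T:ℝ)+3)/45 * (ya - yb) ≤ (6*(T:ℝ)+3)/45 * (2.6*H^3) :=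
              mul_le_mul_of_nonneg_left hgap_ab2 (by positivity)
            have h2 : (6*(T:ℝ)+3)/45 * (2.6*H^3) = 2.6/45*((6*(T:ℝ)+3)*H)*H^2 := by ring
            rw [h2, hmH] at h1
            rw [hddef]
            nlinarith only [h1, hpi4, hH2pos]
          have hstep2 : (6*(T:ℝ)+3)/45 * (ya - yb) ≤ yz - yb := by
            rw [hyzdef]; linarith only [hstep, hpos1]
          calc (6*(T:ℝ)+3)/45 * (Real.sqrt 2 * (ya - yb))
              = Real.sqrt 2 * ((6*(T:ℝ)+3)/45 * (ya - yb)) := by ring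
            _ ≤ Real.sqrt 2 * (yz - yb) :=
                mul_le_mul_of_nonneg_left hstep2 (Real.sqrt_nonneg 2)
      · by_cases hke : k = 2*T+1
        · subst hke
          rw [hlwe, ← hyedef]
          have hneg1 : ya - ye < 0 := by linarith only [hgap_ea1, hH2pos]
          have hneg2 : yz - ye < 0 := by
            rw [hyzdef, hddef]; linarith only [hgap_ea1, hH2pos]
          rw [abs_of_neg hneg1, abs_of_neg hneg2]
          constructor
          · nlinarith only [hneg1, hs2l]
          · have hstep2 : (1:ℝ)/2 * (ye - ya) ≤ -(yz - ye) := by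
              rw [hyzdef, hddef]; linarith only [hgap_ea1, hH2pos]
            calc (1:ℝ)/2 * (Real.sqrt 2 * -(ya - ye))
                = Real.sqrt 2 * ((1:ℝ)/2 * (ye - ya)) := by ring
              _ ≤ Real.sqrt 2 * -(yz - ye) :=
                  mul_le_mul_of_nonneg_left hstep2 (Real.sqrt_nonneg 2)
        · have hklt := hy_lt k hk3 hka hke hkb
          rw [hlwo k hkb hke, one_mul]
          have hpos1 : (0:ℝ) < ya - ynode T k := by linarith only [hklt]
          have hpos2 : (0:ℝ) < yz - ynode T k := by
            rw [hyzdef]; linarith only [hklt, hd0]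
          rw [abs_of_pos hpos1, abs_of_pos hpos2]
          constructor
          · nlinarith only [hpos1, hs2l]
          · apply mul_le_mul_of_nonneg_left ?_ (Real.sqrt_nonneg 2)
            rw [hyzdef]; linarith only [hd0]
    · have hzk : zstar (6*T+2) k = (-1-Complex.I)*((ynode T (6*T+3-k) : ℝ) : ℂ) :=
        zstar_neg_eq T k (by omega) hkn
      have hv := hynode_nonneg (6*T+3-k)
      rw [hza, hzk, hzdef, cross_dist, cross_dist]
      rw [hlwo k (by omega) (by omega), one_mul]
      have hmono : 2*ya^2 + 2*(ynode T (6*T+3-k))^2 ≤ 2*yz^2 + 2*(ynode T (6*T+3-k))^2 := by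
        have : ya ≤ yz := by rw [hyzdef]; linarith only [hd0]
        nlinarith only [this, hya_pos]
      exact ⟨Real.sqrt_pos.mpr (by nlinarith only [hya_pos, sq_nonneg (ynode T (6*T+3-k))]),
        Real.sqrt_le_sqrt hmono⟩
  -- z is distinct from every node
  have hz_ne : ∀ k : ℕ, k ≤ 6*T+2 → z ≠ zstar (6*T+2) k := by
    intro k hk
    apply ne_of_abs_sub_pos
    by_cases hka : k = 2*T
    · subst hka
      rw [hza, hzdef, ray_dist, abs_of_pos (by rw [hyzdef]; linarith only [hd0] : (0:ℝ) < yz - ya)]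
      rw [hyzdef]
      nlinarith only [hs2l, hd0]
    · by_cases hk3 : k ≤ 3*T+1
      · have hzk : zstar (6*T+2) k = (-1+Complex.I)*((ynode T k : ℝ) : ℂ) := zstar_pos_eq T k hk3
        rw [hzk, hzdef, ray_dist]
        by_cases hkb : k = 2*T+2
        · subst hkb
          rw [← hybdef, abs_of_pos (by rw [hyzdef]; linarith only [hgap_ab1, hH3pos, hd0] :
            (0:ℝ) < yz - yb)]
          rw [hyzdef]
          nlinarith only [hs2l, hd0, hgap_ab1, hH3pos]
        · by_cases hke : k = 2*T+1
          · subst hke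
            rw [← hyedef, abs_of_neg (by linarith only [hyz_lt_ye] : yz - ye < 0)]
            nlinarith only [hs2l, hyz_lt_ye]
          · have hklt := hy_lt k hk3 hka hke hkb
            rw [abs_of_pos (by rw [hyzdef]; linarith only [hklt, hd0] : (0:ℝ) < yz - ynode T k)]
            rw [hyzdef]
            nlinarith only [hs2l, hklt, hd0]
      · have hzk : zstar (6*T+2) k = (-1-Complex.I)*((ynode T (6*T+3-k) : ℝ) : ℂ) :=
          zstar_neg_eq T k (by omega) hk
        rw [hzk, hzdef, cross_dist]
        exact Real.sqrt_pos.mpr (by nlinarith only [hyz_pos, sq_nonneg (ynode T (6*T+3-k))])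
  -- derivative of omegaF at node 2T
  have haR : 2*T ∈ Finset.range (6*T+2+1) := Finset.mem_range.mpr (by omega)
  set P : Finset ℕ := (Finset.range (6*T+2+1)).erase (2*T) with hPdef
  set Q : Polynomial ℂ := ∏ k ∈ P, (Polynomial.X - Polynomial.C (zstar (6*T+2) k)) with hQdef
  have hQeval : ∀ w : ℂ, Polynomial.eval w Q = ∏ k ∈ P, (w - zstar (6*T+2) k) := by
    intro w
    rw [hQdef, Polynomial.eval_prod]
    simp only [Polynomial.eval_sub, Polynomial.eval_X, Polynomial.eval_C]
  have homega : omegaF (6*T+2) = fun w : ℂ =>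
      (w - zstar (6*T+2) (2*T)) * Polynomial.eval w Q := by
    funext w
    rw [omegaF, hQeval]
    exact (Finset.mul_prod_erase _ _ haR).symm
  have hderiv : deriv (omegaF (6*T+2)) (zstar (6*T+2) (2*T))
      = ∏ k ∈ P, (zstar (6*T+2) (2*T) - zstar (6*T+2) k) := by
    have hd : HasDerivAt (fun w : ℂ => (w - zstar (6*T+2) (2*T)) * Polynomial.eval w Q)
        (1 * Polynomial.eval (zstar (6*T+2) (2*T)) Q
          + (zstar (6*T+2) (2*T) - zstar (6*T+2) (2*T))
            * Polynomial.eval (zstar (6*T+2) (2*T)) (Polynomial.derivative Q))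
        (zstar (6*T+2) (2*T)) :=
      ((hasDerivAt_id _).sub_const _).mul (Q.hasDerivAt _)
    rw [homega, hd.deriv, sub_self, zero_mul, add_zero, one_mul, hQeval]
  -- assemble
  refine ⟨z, hzmem, hz_ne, ?_⟩
  have hterm_nonneg : ∀ k ∈ Finset.range (6*T+2+1),
      0 ≤ ‖omegaF (6*T+2) z‖ /
        (‖deriv (omegaF (6*T+2)) (zstar (6*T+2) k)‖
          * ‖z - zstar (6*T+2) k‖) := by
    intro k _
    positivity
  have hsingle := Finset.single_le_sum hterm_nonneg haR
  have habs_omega : ‖omegaF (6*T+2) z‖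
      = ‖z - zstar (6*T+2) (2*T)‖ * ∏ k ∈ P, ‖z - zstar (6*T+2) k‖ := by
    rw [omegaF, norm_prod]
    exact (Finset.mul_prod_erase _ _ haR).symm
  have habs_deriv : ‖deriv (omegaF (6*T+2)) (zstar (6*T+2) (2*T))‖
      = ∏ k ∈ P, ‖zstar (6*T+2) (2*T) - zstar (6*T+2) k‖ := by
    rw [hderiv, norm_prod]
  have hdz0 : 0 < ‖z - zstar (6*T+2) (2*T)‖ := by
    rw [hza, hzdef, ray_dist, abs_of_pos (by rw [hyzdef]; linarith only [hd0] : (0:ℝ) < yz - ya)]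
    rw [hyzdef]
    nlinarith only [hs2l, hd0]
  have hD0 : 0 < ∏ k ∈ P, ‖zstar (6*T+2) (2*T) - zstar (6*T+2) k‖ :=
    Finset.prod_pos (fun k hk => (hkey k hk).1)
  have hprod_lw : ∏ k ∈ P, lw k = (6*(T:ℝ)+3)/45 * (1/2) := by
    have hbP : 2*T+2 ∈ P := Finset.mem_erase.mpr ⟨by omega, Finset.mem_range.mpr (by omega)⟩
    have heP : 2*T+1 ∈ P.erase (2*T+2) :=
      Finset.mem_erase.mpr ⟨by omega, Finset.mem_erase.mpr ⟨by omega, Finset.mem_range.mpr (by omega)⟩⟩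
    rw [← Finset.mul_prod_erase P lw hbP, ← Finset.mul_prod_erase _ lw heP, hlwb, hlwe,
      Finset.prod_eq_one]
    · ring
    · intro k hk
      have ha' := Finset.mem_erase.mp hk
      have hb' := Finset.mem_erase.mp ha'.2
      exact hlwo k hb'.1 ha'.1
  have hprod_le : (6*(T:ℝ)+3)/45 * (1/2)
        * ∏ k ∈ P, ‖zstar (6*T+2) (2*T) - zstar (6*T+2) k‖
      ≤ ∏ k ∈ P, ‖z - zstar (6*T+2) k‖ := by
    rw [← hprod_lw, ← Finset.prod_mul_distrib]
    apply Finset.prod_le_prod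
    · intro k hk
      have hlw_nonneg : 0 ≤ lw k := by
        rcases eq_or_ne k (2*T+2) with h | h
        · rw [h, hlwb]; positivity
        · rcases eq_or_ne k (2*T+1) with h' | h'
          · rw [h', hlwe]; norm_num
          · rw [hlwo k h h']; norm_num
      exact mul_nonneg hlw_nonneg (norm_nonneg _)
    · intro k hk
      exact (hkey k hk).2
  have hFa : (6*(T:ℝ)+3)/90
      ≤ ‖omegaF (6*T+2) z‖ /
        (‖deriv (omegaF (6*T+2)) (zstar (6*T+2) (2*T))‖
          * ‖z - zstar (6*T+2) (2*T)‖) := by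
    rw [habs_omega, habs_deriv]
    rw [show ‖z - zstar (6*T+2) (2*T)‖
          * (∏ k ∈ P, ‖z - zstar (6*T+2) k‖)
        / ((∏ k ∈ P, ‖zstar (6*T+2) (2*T) - zstar (6*T+2) k‖)
          * ‖z - zstar (6*T+2) (2*T)‖)
        = (∏ k ∈ P, ‖z - zstar (6*T+2) k‖)
          / (∏ k ∈ P, ‖zstar (6*T+2) (2*T) - zstar (6*T+2) k‖)
          * (‖z - zstar (6*T+2) (2*T)‖ / ‖z - zstar (6*T+2) (2*T)‖)
        by ring]
    rw [div_self hdz0.ne', mul_one, le_div_iff₀ hD0]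
    calc (6*(T:ℝ)+3)/90 * ∏ k ∈ P, ‖zstar (6*T+2) (2*T) - zstar (6*T+2) k‖
        = (6*(T:ℝ)+3)/45 * (1/2)
            * ∏ k ∈ P, ‖zstar (6*T+2) (2*T) - zstar (6*T+2) k‖ := by ring
      _ ≤ _ := hprod_le
  calc (6*(T:ℝ)+3)/90 ≤ _ := hFa
    _ ≤ LebSum (6*T+2) z := hsingle
lemma phi_le_one (x : ℝ) : phi x ≤ 1 := by
  have h1 := Real.sin_sq_add_cos_sq x
  have h2 := Real.sin_le_one x
  have h3 := Real.neg_one_le_sin x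
  have h4 := Real.cos_le_one x
  have h5 := Real.neg_one_le_cos x
  unfold phi
  nlinarith [sq_nonneg (Real.sin x - Real.cos x), sq_nonneg (Real.sin x + Real.cos x),
    sq_nonneg (Real.sin x), sq_nonneg (Real.cos x), sq_nonneg (Real.sin x * Real.cos x)]

lemma ynode_nonneg' (T k : ℕ) : 0 ≤ ynode T k := by
  rw [ynode]; positivity

lemma ynode_le (T k : ℕ) : ynode T k ≤ 2*Real.sqrt 2 := by
  rw [ynode]
  have h1 : Real.sqrt (phi (π*(k:ℝ)/(6*(T:ℝ)+3))) ≤ 1 := by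
    rw [show (1:ℝ) = Real.sqrt 1 by rw [Real.sqrt_one]]
    exact Real.sqrt_le_sqrt (phi_le_one _)
  nlinarith [Real.sqrt_nonneg (phi (π*(k:ℝ)/(6*(T:ℝ)+3))), sqrt2_lb,
    Real.sqrt_nonneg (2:ℝ)]

lemma abs_ray_neg : ‖-1 - Complex.I‖ = Real.sqrt 2 := by
  rw [Complex.norm_def, Complex.normSq_apply]
  norm_num

lemma node_abs (T j : ℕ) (hj : j ≤ 6*T+2) : ‖zstar (6*T+2) j‖ ≤ 4 := by
  have key : ∀ y : ℝ, 0 ≤ y → y ≤ 2*Real.sqrt 2 → Real.sqrt 2 * y ≤ 4 := by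
    intro y h0 h1
    nlinarith [sqrt2_sq, sqrt2_lb, sqrt2_ub]
  by_cases h3 : j ≤ 3*T+1
  · rw [zstar_pos_eq T j h3, norm_mul, abs_ray_pos, Complex.norm_real, Real.norm_eq_abs,
      abs_of_nonneg (ynode_nonneg' T j)]
    exact key _ (ynode_nonneg' T j) (ynode_le T j)
  · rw [zstar_neg_eq T j (by omega) hj, norm_mul, abs_ray_neg, Complex.norm_real, Real.norm_eq_abs,
      abs_of_nonneg (ynode_nonneg' T _)]
    exact key _ (ynode_nonneg' T _) (ynode_le T _)

lemma gamma_abs {w : ℂ} (hw : w ∈ gamma0) : ‖w‖ ≤ 4 := by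
  have hb : Real.sqrt (3*Real.sqrt 3/2) ≤ 1.7 := by
    have h0 : (0:ℝ) ≤ 3*Real.sqrt 3/2 := by positivity
    nlinarith [Real.sq_sqrt h0, Real.sqrt_nonneg (3*Real.sqrt 3/2), sqrt3_ub, sqrt3_lb]
  rcases hw with ⟨x, ⟨hx0, hx1⟩, rfl⟩ | ⟨x, ⟨hx0, hx1⟩, rfl⟩ <;>
    rw [const_eq] at hx1
  · rw [norm_mul, abs_ray_pos, Complex.norm_real, Real.norm_eq_abs, abs_of_nonneg hx0]
    nlinarith [sqrt2_lb, sqrt2_ub]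
  · rw [norm_mul, abs_ray_neg, Complex.norm_real, Real.norm_eq_abs, abs_of_nonneg hx0]
    nlinarith [sqrt2_lb, sqrt2_ub]

lemma div_bound {A t c B : ℝ} (hA : 0 ≤ A) (ht : 0 ≤ t) (hc : 0 ≤ c) (hB : 0 ≤ B)
    (h : A ≤ t*B) : A/(c*t) ≤ B/c := by
  rcases eq_or_lt_of_le hc with hc0 | hc0
  · rw [← hc0, zero_mul, div_zero, div_zero]
  rcases eq_or_lt_of_le ht with ht0 | ht0
  · have hA0 : A = 0 := le_antisymm (by rw [← ht0] at h; linarith) hA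
    rw [hA0, zero_div]
    positivity
  rw [div_le_div_iff₀ (by positivity) hc0]
  nlinarith

lemma lebsum_bdd (T : ℕ) :
    BddAbove (Set.range fun w : gamma0 => LebSum (6*T+2) (w : ℂ)) := by
  classical
  refine ⟨∑ k ∈ Finset.range (6*T+2+1),
    (8:ℝ)^(6*T+2) / ‖deriv (omegaF (6*T+2)) (zstar (6*T+2) k)‖, ?_⟩
  rintro x ⟨w, rfl⟩
  obtain ⟨w, hw⟩ := w
  simp only
  rw [LebSum]
  apply Finset.sum_le_sum
  intro k hk
  apply div_bound (norm_nonneg _) (norm_nonneg _) (norm_nonneg _)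
    (by positivity)
  have habs : ‖omegaF (6*T+2) w‖
      = ‖w - zstar (6*T+2) k‖ * ∏ j ∈ (Finset.range (6*T+2+1)).erase k,
          ‖w - zstar (6*T+2) j‖ := by
    rw [omegaF, norm_prod]
    exact (Finset.mul_prod_erase _ _ hk).symm
  rw [habs]
  apply mul_le_mul_of_nonneg_left ?_ (norm_nonneg _)
  calc ∏ j ∈ (Finset.range (6*T+2+1)).erase k, ‖w - zstar (6*T+2) j‖
      ≤ ∏ _j ∈ (Finset.range (6*T+2+1)).erase k, (8:ℝ) := by
        apply Finset.prod_le_prod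
        · intro j _; exact norm_nonneg _
        · intro j hj
          have hjn : j ≤ 6*T+2 := by
            have := Finset.mem_range.mp (Finset.mem_erase.mp hj).2; omega
          have h1 : ‖w - zstar (6*T+2) j‖
              ≤ ‖w‖ + ‖zstar (6*T+2) j‖ := by
            simpa using norm_sub_le w (zstar (6*T+2) j)
          have h2 := gamma_abs hw
          have h3 := node_abs T j hjn
          linarith
    _ = (8:ℝ)^(6*T+2) := by
        rw [Finset.prod_const, Finset.card_erase_of_mem hk, Finset.card_range]
        norm_num

lemma logsq_le {x y : ℝ} (hx : 1 ≤ x) (hxy : x ≤ y) : Real.log x ^ 2 ≤ 16*Real.sqrt y := by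
  have hy : (1:ℝ) ≤ y := le_trans hx hxy
  have h0 : 0 ≤ Real.log x := Real.log_nonneg hx
  have h1 : Real.log x ≤ Real.log y := Real.log_le_log (by linarith) hxy
  have h2 : Real.log y = 4*Real.log (Real.sqrt (Real.sqrt y)) := by
    rw [Real.log_sqrt (Real.sqrt_nonneg y), Real.log_sqrt (by linarith)]; ring
  have h3 : Real.log (Real.sqrt (Real.sqrt y)) ≤ Real.sqrt (Real.sqrt y) - 1 :=
    Real.log_le_sub_one_of_pos (by positivity)
  have h4 : Real.log x ≤ 4*Real.sqrt (Real.sqrt y) := by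
    rw [h2] at h1
    nlinarith [Real.sqrt_nonneg (Real.sqrt y)]
  have h5 : (Real.sqrt (Real.sqrt y))^2 = Real.sqrt y := Real.sq_sqrt (Real.sqrt_nonneg y)
  nlinarith [Real.sqrt_nonneg (Real.sqrt y)]

lemma key_numeric (M : ℝ) (hM : 0 < M) (T : ℕ)
    (hT : 600000 + 345600 * Nat.ceil (M^2) ≤ T) :
    M * Real.log ((6*T+2 : ℕ) : ℝ) ^ 2 ≤ (6*(T:ℝ)+3)/90 := by
  have hceil : M^2 ≤ (Nat.ceil (M^2) : ℝ) := Nat.le_ceil _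
  have hTR : (345600:ℝ) * (Nat.ceil (M^2) : ℝ) ≤ (T:ℝ) := by
    have : 345600 * Nat.ceil (M^2) ≤ T := by omega
    exact_mod_cast this
  have hTbig : 2073600*M^2 ≤ 6*(T:ℝ)+3 := by nlinarith
  have hx1 : (1:ℝ) ≤ ((6*T+2 : ℕ) : ℝ) := by
    have : (1:ℕ) ≤ 6*T+2 := by omega
    exact_mod_cast this
  have hxy : ((6*T+2 : ℕ) : ℝ) ≤ 6*(T:ℝ)+3 := by push_cast; linarith
  have hlog := logsq_le hx1 hxy
  have hsq : 1440*M ≤ Real.sqrt (6*(T:ℝ)+3) := by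
    have h := Real.sqrt_le_sqrt (by nlinarith : (1440*M)^2 ≤ 6*(T:ℝ)+3)
    rwa [Real.sqrt_sq (by positivity)] at h
  have hms : Real.sqrt (6*(T:ℝ)+3) * Real.sqrt (6*(T:ℝ)+3) = 6*(T:ℝ)+3 :=
    Real.mul_self_sqrt (by positivity)
  have hstep : M * (16*Real.sqrt (6*(T:ℝ)+3)) ≤ (6*(T:ℝ)+3)/90 := by
    nlinarith [mul_le_mul_of_nonneg_right hsq (Real.sqrt_nonneg (6*(T:ℝ)+3))]
  calc M * Real.log ((6*T+2 : ℕ) : ℝ) ^ 2 ≤ M * (16*Real.sqrt (6*(T:ℝ)+3)) :=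
        mul_le_mul_of_nonneg_left hlog hM.le
    _ ≤ (6*(T:ℝ)+3)/90 := hstep
end S16

/-- For every `M > 0` there are `n ≥ 2` and `z ∈ γ₀` (distinct from all
nodes) with Lebesgue function value `≥ M·(log n)²`; moreover such `n` can be taken arbitrarily
large, so that `limsup_n L_{z*_n}/(log n)² = ∞` for the Lebesgue constant
`L_{z*_n} = sup_{z ∈ γ₀} LebSum n z`. -/
theorem stmt16 :
    (∀ M > (0 : ℝ), ∃ n : ℕ, 2 ≤ n ∧ ∃ z ∈ gamma0,
      (∀ k : ℕ, k ≤ n → z ≠ zstar n k) ∧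
      M * Real.log n ^ 2 ≤ LebSum n z) ∧
    (∀ M > (0 : ℝ), ∀ N : ℕ, ∃ n : ℕ, N ≤ n ∧ 2 ≤ n ∧
      M * Real.log n ^ 2 ≤ ⨆ z : gamma0, LebSum n z) := by
  constructor
  · intro M hM
    set T : ℕ := 600000 + 345600 * Nat.ceil (M^2) with hTdef
    obtain ⟨z, hzm, hzne, hlb⟩ := S16.main_estimate T (by omega)
    refine ⟨6*T+2, by omega, z, hzm, hzne, ?_⟩
    calc M * Real.log ((6*T+2 : ℕ) : ℝ) ^ 2 ≤ (6*(T:ℝ)+3)/90 :=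
          S16.key_numeric M hM T (by omega)
      _ ≤ LebSum (6*T+2) z := hlb
  · intro M hM N
    set T : ℕ := 600000 + N + 345600 * Nat.ceil (M^2) with hTdef
    obtain ⟨z, hzm, hzne, hlb⟩ := S16.main_estimate T (by omega)
    refine ⟨6*T+2, by omega, by omega, ?_⟩
    have hsup : LebSum (6*T+2) z ≤ ⨆ w : gamma0, LebSum (6*T+2) (w : ℂ) :=
      le_ciSup (S16.lebsum_bdd T) (⟨z, hzm⟩ : gamma0)
    calc M * Real.log ((6*T+2 : ℕ) : ℝ) ^ 2 ≤ (6*(T:ℝ)+3)/90 :=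
          S16.key_numeric M hM T (by omega)
      _ ≤ LebSum (6*T+2) z := hlb
      _ ≤ _ := hsup
end
end
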